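/- arXiv:1503.01069 — 6 statements merged into one kernel-verified Lean document; each statement's English description precedes it below -/
import Mathlib

section
/- Let G be a connected graph on N vertices each of whose edges is colored black or red, let G_+ (resp. G_−) denote the spanning subgraph on all N vertices consisting of the black (resp. red) edges, and let c(·) denote the number of connected components. Then for an integer k, G has a spanning tree containing exactly k red edges if and only if c(G_+) − 1 ≤ k ≤ N − c(G_−). -/
open Finset
open scoped Classical

/-- The simple graph on `Fin N` whose edges are the (ordered) pairs in `T`. -/
def edgeGraph {N : ℕ} (T : Finset (Fin N × Fin N)) : SimpleGraph (Fin N) :=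
  SimpleGraph.fromRel fun a b => (a, b) ∈ T

/-!
A forest with `m` edges on `N` vertices has `N - m` components. So the red edges of a spanning
tree `T`, being a forest inside `G₋`, number at most `N - c(G₋)`, and likewise its black edges
number at most `N - c(G₊)`; as `T` has `N - 1` edges this gives both bounds.
Conversely, extending a spanning forest of `G₊` to a spanning tree `T₀` of `G` leaves at most
`c(G₊) - 1` red edges. Extend the red edges of `T₀` to a spanning forest of `G₋`, which has
`N - c(G₋)` edges, pick `k` of them containing those of `T₀`, and extend these to a spanning
tree using black edges only: this is possible since, together with the black edges, they
contain `T₀`.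
-/

open SimpleGraph

namespace SimpleGraph

variable {V : Type*} {G : SimpleGraph V} {u v x y : V}

theorem Reachable.of_sup_edge (h : (G ⊔ edge u v).Reachable x y) :
    G.Reachable x y ∨ G.Reachable x u ∧ G.Reachable v y ∨
      G.Reachable x v ∧ G.Reachable u y := by
  obtain ⟨p⟩ := h
  induction p with
  | nil => exact Or.inl .rfl
  | @cons a b c hab _ ih =>
    rcases (sup_adj ..).mp hab with hab | hab
    · have hab := hab.reachable
      rcases ih with h | h | h
      · exact Or.inl (hab.trans h)
      · exact Or.inr (Or.inl ⟨hab.trans h.1, h.2⟩)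
      · exact Or.inr (Or.inr ⟨hab.trans h.1, h.2⟩)
    · obtain ⟨⟨rfl, rfl⟩ | ⟨rfl, rfl⟩, -⟩ := (edge_adj ..).mp hab
      · rcases ih with h | h | h
        · exact Or.inr (Or.inl ⟨.rfl, h⟩)
        · exact Or.inr (Or.inl ⟨.rfl, h.2⟩)
        · exact Or.inl h.2
      · rcases ih with h | h | h
        · exact Or.inr (Or.inr ⟨.rfl, h⟩)
        · exact Or.inl h.2
        · exact Or.inr (Or.inr ⟨.rfl, h.2⟩)

theorem card_connectedComponent_bot :
    Nat.card (⊥ : SimpleGraph V).ConnectedComponent = Nat.card V :=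
  (Nat.card_eq_of_bijective _
    ⟨fun _ _ h => reachable_bot.mp (ConnectedComponent.exact h), Quot.mk_surjective⟩).symm

/-- The components of `G` other than that of `v` correspond to those of `G ⊔ edge u v`. -/
theorem card_connectedComponent_sup_edge_add_one [Finite V] (h : ¬G.Reachable u v) :
    Nat.card (G ⊔ edge u v).ConnectedComponent + 1 = Nat.card G.ConnectedComponent := by
  set cv := G.connectedComponentMk v
  let f : {c // c ≠ cv} → (G ⊔ edge u v).ConnectedComponent :=
    fun c => c.1.map (Hom.ofLE le_sup_left)
  have hf : f.Bijective := by
    constructor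
    · rintro ⟨c, hc⟩ ⟨d, hd⟩ hcd
      induction c using ConnectedComponent.ind with | h x => ?_
      induction d using ConnectedComponent.ind with | h y => ?_
      simp only [f, ConnectedComponent.map_mk, Hom.coe_ofLE, id, ConnectedComponent.eq] at hcd
      rcases hcd.of_sup_edge with hxy | ⟨-, hvy⟩ | ⟨hxv, -⟩
      · exact Subtype.ext (ConnectedComponent.sound hxy)
      · exact absurd (ConnectedComponent.sound hvy.symm) hd
      · exact absurd (ConnectedComponent.sound hxv) hc
    · intro c
      induction c using ConnectedComponent.ind with | h x => ?_
      by_cases hx : G.connectedComponentMk x = cv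
      · refine ⟨⟨G.connectedComponentMk u, fun h' => h (ConnectedComponent.exact h')⟩, ?_⟩
        have hxv : (G ⊔ edge u v).Reachable x v := (ConnectedComponent.exact hx).mono le_sup_left
        have huv : (G ⊔ edge u v).Adj u v := (sup_adj ..).mpr <| Or.inr <|
          (edge_adj ..).mpr ⟨Or.inl ⟨rfl, rfl⟩, fun huv => h (huv ▸ .rfl)⟩
        exact ConnectedComponent.sound (huv.reachable.trans hxv.symm)
      · exact ⟨⟨_, hx⟩, rfl⟩
  rw [← Nat.card_eq_of_bijective f hf, ← Finite.card_option,
    Nat.card_congr (Equiv.optionSubtypeNe cv)]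

theorem card_connectedComponent_le [Finite V] (G : SimpleGraph V) :
    Nat.card G.ConnectedComponent ≤ Nat.card V :=
  card_connectedComponent_bot (V := V) ▸ ConnectedComponent.card_le_card_of_le bot_le

theorem Connected.card_connectedComponent (h : G.Connected) :
    Nat.card G.ConnectedComponent = 1 :=
  Nat.card_eq_one_iff_unique.mpr
    ⟨h.preconnected.subsingleton_connectedComponent, h.nonempty.map G.connectedComponentMk⟩

end SimpleGraph

theorem Finset.card_inter_add_card_inter {α : Type*} [DecidableEq α] {T A B : Finset α}
    (hT : T ⊆ A ∪ B) (hAB : Disjoint A B) : #(T ∩ A) + #(T ∩ B) = #T := by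
  rw [← card_union_of_disjoint (hAB.mono inter_subset_right inter_subset_right),
    ← inter_union_distrib_left, inter_eq_left.mpr hT]

section

variable {N : ℕ}

theorem edgeGraph_adj {E : Finset (Fin N × Fin N)} {a b : Fin N} :
    (edgeGraph E).Adj a b ↔ a ≠ b ∧ ((a, b) ∈ E ∨ (b, a) ∈ E) :=
  fromRel_adj _ a b

theorem edgeGraph_empty : edgeGraph (∅ : Finset (Fin N × Fin N)) = ⊥ := by
  ext; simp [edgeGraph_adj]

theorem edgeGraph_insert (f : Fin N × Fin N) (E : Finset (Fin N × Fin N)) :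
    edgeGraph (insert f E) = edgeGraph E ⊔ edge f.1 f.2 := by
  ext a b
  simp only [edgeGraph_adj, sup_adj, edge_adj, mem_insert, Prod.ext_iff]
  grind

theorem edgeGraph_mono {A E : Finset (Fin N × Fin N)} (h : A ⊆ E) :
    edgeGraph A ≤ edgeGraph E := fun _ _ hab =>
  edgeGraph_adj.mpr ⟨(edgeGraph_adj.mp hab).1, (edgeGraph_adj.mp hab).2.imp (@h _) (@h _)⟩

theorem exists_edgeGraph_eq {A E : Finset (Fin N × Fin N)} {H : SimpleGraph (Fin N)}
    (hA : ∀ p ∈ A, p.1 ≠ p.2) (hAE : A ⊆ E) (hAH : edgeGraph A ≤ H)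
    (hHE : H ≤ edgeGraph E) : ∃ F, A ⊆ F ∧ F ⊆ E ∧ edgeGraph F = H := by
  refine ⟨E.filter fun p => H.Adj p.1 p.2, fun p hp => ?_, filter_subset _ _, ?_⟩
  · exact mem_filter.mpr ⟨hAE hp, hAH (edgeGraph_adj.mpr ⟨hA p hp, .inl hp⟩)⟩
  · ext a b
    have hab := @hHE a b
    rw [edgeGraph_adj] at hab ⊢
    simp only [mem_filter]
    grind [H.adj_symm, H.ne_of_adj]

theorem card_add_card_connectedComponent_of_isAcyclic {E : Finset (Fin N × Fin N)}
    (hE : ∀ p ∈ E, p.1 < p.2) (hac : (edgeGraph E).IsAcyclic) :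
    #E + Nat.card (edgeGraph E).ConnectedComponent = N := by
  induction E using Finset.induction_on with
  | empty => rw [edgeGraph_empty, card_connectedComponent_bot, Nat.card_fin, card_empty, zero_add]
  | @insert f E hf ih =>
    rw [edgeGraph_insert, isAcyclic_sup_fromEdgeSet_iff] at hac
    have hf' := hE f (mem_insert_self f E)
    have hnr : ¬(edgeGraph E).Reachable f.1 f.2 := by
      refine fun hr => (hac.2 hr).elim hf'.ne fun hadj => ?_
      rcases (edgeGraph_adj.mp hadj).2 with h | h
      · exact hf h
      · exact absurd (hE _ (mem_insert_of_mem h)) hf'.not_gt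
    have hE := ih (fun p hp => hE p (mem_insert_of_mem hp)) hac.1
    have hsup := card_connectedComponent_sup_edge_add_one (V := Fin N) hnr
    rw [edgeGraph_insert, card_insert_of_notMem hf]
    omega

theorem card_add_one_of_isTree {T : Finset (Fin N × Fin N)}
    (hT : ∀ p ∈ T, p.1 < p.2) (htree : (edgeGraph T).IsTree) : #T + 1 = N :=
  htree.connected.card_connectedComponent ▸
    card_add_card_connectedComponent_of_isAcyclic hT htree.isAcyclic

theorem card_add_card_connectedComponent_le {F E : Finset (Fin N × Fin N)} (hFE : F ⊆ E)
    (hF : ∀ p ∈ F, p.1 < p.2) (hac : (edgeGraph F).IsAcyclic) :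
    #F + Nat.card (edgeGraph E).ConnectedComponent ≤ N := by
  have hF := card_add_card_connectedComponent_of_isAcyclic hF hac
  have hle := ConnectedComponent.card_le_card_of_le (edgeGraph_mono hFE)
  omega

theorem card_inter_add_card_connectedComponent_le {T E : Finset (Fin N × Fin N)}
    (hE : ∀ p ∈ E, p.1 < p.2) (htree : (edgeGraph T).IsTree) :
    #(T ∩ E) + Nat.card (edgeGraph E).ConnectedComponent ≤ N :=
  card_add_card_connectedComponent_le inter_subset_right (fun p hp => hE p (mem_inter.mp hp).2)
    (htree.isAcyclic.anti (edgeGraph_mono inter_subset_left))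

theorem exists_spanning_forest {A E : Finset (Fin N × Fin N)} (hE : ∀ p ∈ E, p.1 < p.2)
    (hAE : A ⊆ E) (hac : (edgeGraph A).IsAcyclic) :
    ∃ F, A ⊆ F ∧ F ⊆ E ∧ (edgeGraph F).IsAcyclic ∧
      #F + Nat.card (edgeGraph E).ConnectedComponent = N := by
  obtain ⟨H, hAH, hHE, hH, hreach⟩ :=
    exists_isAcyclic_reachable_eq_le_of_le_of_isAcyclic (edgeGraph_mono hAE) hac
  obtain ⟨F, hAF, hFE, rfl⟩ := exists_edgeGraph_eq (fun p hp => (hE p (hAE hp)).ne) hAE hAH hHE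
  refine ⟨F, hAF, hFE, hH, ?_⟩
  have hcard : Nat.card (edgeGraph F).ConnectedComponent =
      Nat.card (edgeGraph E).ConnectedComponent := by
    show Nat.card (Quot _) = Nat.card (Quot _)
    rw [hreach]
  exact hcard ▸ card_add_card_connectedComponent_of_isAcyclic (fun p hp => hE p (hFE hp)) hH

theorem exists_isTree_between {A E : Finset (Fin N × Fin N)} (hE : ∀ p ∈ E, p.1 < p.2)
    (hAE : A ⊆ E) (hac : (edgeGraph A).IsAcyclic) (hconn : (edgeGraph E).Connected) :
    ∃ T, A ⊆ T ∧ T ⊆ E ∧ (edgeGraph T).IsTree := by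
  obtain ⟨H, hAH, hHE, hH⟩ := hconn.exists_isTree_le_of_le_of_isAcyclic (edgeGraph_mono hAE) hac
  obtain ⟨T, hAT, hTE, rfl⟩ := exists_edgeGraph_eq (fun p hp => (hE p (hAE hp)).ne) hAE hAH hHE
  exact ⟨T, hAT, hTE, hH⟩

variable {Eb Er : Finset (Fin N × Fin N)}

theorem exists_isTree_card_inter_add_one_le (hEb : ∀ p ∈ Eb, p.1 < p.2)
    (hEr : ∀ p ∈ Er, p.1 < p.2) (hdisj : Disjoint Eb Er)
    (hconn : (edgeGraph (Eb ∪ Er)).Connected) :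
    ∃ T ⊆ Eb ∪ Er, (edgeGraph T).IsTree ∧
      #(T ∩ Er) + 1 ≤ Nat.card (edgeGraph Eb).ConnectedComponent := by
  have hU : ∀ p ∈ Eb ∪ Er, p.1 < p.2 := by grind
  obtain ⟨FB, -, hFB, hFBac, hFBcard⟩ :=
    exists_spanning_forest hEb (empty_subset Eb) (edgeGraph_empty ▸ isAcyclic_bot)
  obtain ⟨T, hFBT, hTU, hT⟩ :=
    exists_isTree_between hU (hFB.trans subset_union_left) hFBac hconn
  have hTcard := card_add_one_of_isTree (fun p hp => hU p (hTU hp)) hT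
  have hsplit := card_inter_add_card_inter hTU hdisj
  have hFBle : #FB ≤ #(T ∩ Eb) := card_le_card (subset_inter hFBT hFB)
  exact ⟨T, hTU, hT, by omega⟩

theorem exists_isTree_card_inter_eq (hEb : ∀ p ∈ Eb, p.1 < p.2)
    (hEr : ∀ p ∈ Er, p.1 < p.2) (hdisj : Disjoint Eb Er) {T₀ : Finset (Fin N × Fin N)}
    (hT₀U : T₀ ⊆ Eb ∪ Er) (hT₀ : (edgeGraph T₀).IsTree) {k : ℕ}
    (hk₀ : #(T₀ ∩ Er) ≤ k) (hk : k + Nat.card (edgeGraph Er).ConnectedComponent ≤ N) :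
    ∃ T ⊆ Eb ∪ Er, (edgeGraph T).IsTree ∧ #(T ∩ Er) = k := by
  obtain ⟨FR, hT₀FR, hFR, hFRac, hFRcard⟩ := exists_spanning_forest hEr inter_subset_right
    (hT₀.isAcyclic.anti (edgeGraph_mono inter_subset_left))
  obtain ⟨R, hT₀R, hRFR, hRk⟩ := exists_subsuperset_card_eq hT₀FR hk₀ (by omega)
  have hRE : R ⊆ Er := hRFR.trans hFR
  have hconn : (edgeGraph (R ∪ Eb)).Connected := by
    refine hT₀.connected.mono (edgeGraph_mono fun p hp => ?_)
    rcases mem_union.mp (hT₀U hp) with h | h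
    · exact mem_union_right _ h
    · exact mem_union_left _ (hT₀R (mem_inter.mpr ⟨hp, h⟩))
  obtain ⟨T, hRT, hTU, hT⟩ := exists_isTree_between (by grind) subset_union_left
    (hFRac.anti (edgeGraph_mono hRFR)) hconn
  refine ⟨T, hTU.trans (union_comm R Eb ▸ union_subset_union_right hRE), hT, ?_⟩
  rw [← hRk]
  congr 1
  ext p
  grind [Finset.disjoint_left]

end

/-- Let `G` be a connected graph on `N` vertices whose edges are colored black
(`Eb`) or red (`Er`).  Then `G` has a spanning tree containing exactly `k` red
edges iff `c(G₊) − 1 ≤ k ≤ N − c(G₋)`, where `c(·)` counts connected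
components (isolated vertices included). -/
theorem spanning_tree_with_k_red_edges_iff
    {N : ℕ} (Eb Er : Finset (Fin N × Fin N))
    (hEb : ∀ p ∈ Eb, p.1 < p.2) (hEr : ∀ p ∈ Er, p.1 < p.2)
    (hdisj : Disjoint Eb Er)
    (hconn : (edgeGraph (Eb ∪ Er)).Connected) (k : ℕ) :
    (∃ T : Finset (Fin N × Fin N),
        T ⊆ Eb ∪ Er ∧ (edgeGraph T).IsTree ∧ (T ∩ Er).card = k) ↔
      (Nat.card (edgeGraph Eb).ConnectedComponent - 1 ≤ k ∧
        k ≤ N - Nat.card (edgeGraph Er).ConnectedComponent) := by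
  constructor
  · rintro ⟨T, hTU, hT, rfl⟩
    have hTcard := card_add_one_of_isTree (fun p hp => by grind) hT
    have hsplit := card_inter_add_card_inter hTU hdisj
    have hb := card_inter_add_card_connectedComponent_le hEb hT
    have hr := card_inter_add_card_connectedComponent_le hEr hT
    omega
  · rintro ⟨hk₀, hk⟩
    obtain ⟨T₀, hT₀U, hT₀, hT₀k⟩ :=
      exists_isTree_card_inter_add_one_le hEb hEr hdisj hconn
    have hErN := Nat.card_fin N ▸ (edgeGraph Er).card_connectedComponent_le
    exact exists_isTree_card_inter_eq hEb hEr hdisj hT₀U hT₀ (by omega) (by omega)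
end

section
/- Dodgson/Desnanot–Jacobi identity: Let M be an n×n matrix over a commutative ring (n ≥ 2), let i < j be row indices and k < l be column indices. Then det(M)·det(M_{ij,kl}) − det(M_{i,k})·det(M_{j,l}) = −det(M_{i,l})·det(M_{j,k}), where M_{U,W} denotes the submatrix of M obtained by deleting the rows in U and the columns in W (remaining rows and columns kept in increasing order). -/
open Matrix Equiv

/-- The strictly monotone embedding `Fin n → Fin (n+2)` whose image omits the
two indices `i < j`; composing `Matrix.submatrix` with it deletes rows (or
columns) `i` and `j`, keeping the remaining ones in increasing order. -/
def delTwo {n : ℕ} {i j : Fin (n + 2)} (h : i < j) : Fin n → Fin (n + 2) :=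
  fun m =>
    j.succAbove ((⟨(i : ℕ), by have hj := j.isLt; have hij : (i : ℕ) < (j : ℕ) := h; omega⟩ :
      Fin (n + 1)).succAbove m)

section Aux

variable {R : Type*} [CommRing R]

/-- Cofactor formula for adjugate entries. -/
private lemma adj_cofactor {m : ℕ} (M : Matrix (Fin (m+1)) (Fin (m+1)) R) (a b : Fin (m+1)) :
    adjugate M b a = (-1:R)^((a:ℕ)+(b:ℕ)) * (M.submatrix a.succAbove b.succAbove).det := by
  rw [adjugate_apply, det_succ_row _ a]
  rw [Finset.sum_eq_single b]
  · have h1 : (M.updateRow a (Pi.single b 1)) a b = 1 := by simp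
    have h2 : (M.updateRow a (Pi.single b 1)).submatrix a.succAbove b.succAbove
        = M.submatrix a.succAbove b.succAbove := by
      ext p q
      simp [Matrix.submatrix_apply, Matrix.updateRow_apply, Fin.succAbove_ne]
    rw [h1, h2, Nat.add_comm]
    ring
  · intro q _ hq
    have : (M.updateRow a (Pi.single b 1)) a q = 0 := by
      simp [Pi.single_apply, hq]
    rw [this]; ring
  · intro h; exact absurd (Finset.mem_univ b) h

private lemma det_submatrix_perm {n : Type*} [DecidableEq n] [Fintype n] (σ τ : Equiv.Perm n)
    (M : Matrix n n R) :
    (M.submatrix σ τ).det = ((Equiv.Perm.sign σ : ℤ) : R) * ((Equiv.Perm.sign τ : ℤ) : R) * M.det := by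
  have h : M.submatrix σ τ = (M.submatrix id τ).submatrix σ id := rfl
  rw [h, det_permute, det_permute']
  ring

private lemma det_col_single {m : ℕ} (A : Matrix (Fin (m+1)) (Fin (m+1)) R) (d : R)
    (h : ∀ p, A p 0 = if p = 0 then d else 0) :
    A.det = d * (A.submatrix Fin.succ Fin.succ).det := by
  rw [det_succ_column_zero, Finset.sum_eq_single 0]
  · simp [h]
  · intro b _ hb; simp [h, hb]
  · intro h'; exact absurd (Finset.mem_univ _) h'

private lemma det_unit_tail_two : ∀ {m : ℕ} (A : Matrix (Fin (m+2)) (Fin (m+2)) R),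
    (∀ p q, q ≠ 0 → q ≠ 1 → A p q = if p = q then 1 else 0) →
    A.det = A 0 0 * A 1 1 - A 0 1 * A 1 0
  | 0, A, _ => by rw [Matrix.det_fin_two]
  | (m+1), A, h => by
    have hlast0 : (Fin.last (m+2)) ≠ 0 := by simp [Fin.ext_iff]
    have hlast1 : (Fin.last (m+2)) ≠ 1 := by simp [Fin.ext_iff]
    have hexp := Matrix.det_succ_column A (Fin.last (m+2))
    rw [Finset.sum_eq_single (Fin.last (m+2))] at hexp
    · rw [h _ _ hlast0 hlast1, if_pos rfl] at hexp
      have hpow : ((-1 : R)) ^ ((Fin.last (m+2) : ℕ) + (Fin.last (m+2) : ℕ)) = 1 :=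
        Even.neg_one_pow ⟨_, rfl⟩
      rw [hexp, hpow, Fin.succAbove_last]
      have := det_unit_tail_two (A.submatrix Fin.castSucc Fin.castSucc) ?_
      · rw [this]
        simp
      · intro p q hq0 hq1
        have : A p.castSucc q.castSucc = if p.castSucc = q.castSucc then 1 else 0 := by
          refine h _ _ ?_ ?_
          · exact Fin.castSucc_ne_zero_iff.mpr hq0
          · simpa [Fin.ext_iff] using hq1
        rw [Matrix.submatrix_apply, this]
        simp [Fin.castSucc_inj]
    · intro p _ hp
      rw [h _ _ hlast0 hlast1, if_neg hp]
      ring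
    · intro h'; exact absurd (Finset.mem_univ _) h'

/-- The permutation of `Fin (n+2)` sending `0 ↦ j`, `1 ↦ i`, `m+2 ↦ delTwo hij m`. -/
private def rhoTwo {n : ℕ} {i j : Fin (n + 2)} (hij : i < j) : Equiv.Perm (Fin (n + 2)) :=
  j.cycleRange.symm *
    Equiv.Perm.decomposeFin.symm (0,
      (⟨(i : ℕ), by have hj := j.isLt; have h : (i : ℕ) < (j : ℕ) := hij; omega⟩ :
        Fin (n + 1)).cycleRange.symm)

private lemma rhoTwo_zero {n : ℕ} {i j : Fin (n + 2)} (hij : i < j) : rhoTwo hij 0 = j := by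
  simp [rhoTwo, Equiv.Perm.mul_apply, Equiv.Perm.decomposeFin_symm_apply_zero,
    Fin.cycleRange_symm_zero]

private lemma rhoTwo_one {n : ℕ} {i j : Fin (n + 2)} (hij : i < j) : rhoTwo hij 1 = i := by
  have h1 : (1 : Fin (n + 2)) = Fin.succ 0 := rfl
  rw [rhoTwo, Equiv.Perm.mul_apply, h1, Equiv.Perm.decomposeFin_symm_apply_succ]
  simp only [Equiv.swap_self, Equiv.refl_apply, Fin.cycleRange_symm_zero,
    Fin.cycleRange_symm_succ]
  set i' : Fin (n+1) := ⟨(i : ℕ), _⟩ with hi'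
  have hlt : i'.castSucc < j := by
    rw [Fin.lt_def]; exact hij
  rw [Fin.succAbove_of_castSucc_lt _ _ hlt]
  ext; simp [hi']

private lemma rhoTwo_succ_succ {n : ℕ} {i j : Fin (n + 2)} (hij : i < j) (m : Fin n) :
    rhoTwo hij m.succ.succ = delTwo hij m := by
  rw [rhoTwo, Equiv.Perm.mul_apply, Equiv.Perm.decomposeFin_symm_apply_succ]
  simp only [Equiv.swap_self, Equiv.refl_apply, Fin.cycleRange_symm_succ]
  rw [delTwo]

private lemma sign_rhoTwo {n : ℕ} {i j : Fin (n + 2)} (hij : i < j) :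
    Equiv.Perm.sign (rhoTwo hij) = (-1 : ℤˣ) ^ ((i : ℕ) + (j : ℕ)) := by
  rw [rhoTwo, _root_.map_mul, Equiv.Perm.decomposeFin.symm_sign, Equiv.Perm.sign_symm,
    Equiv.Perm.sign_symm, Fin.sign_cycleRange, Fin.sign_cycleRange]
  simp [pow_add, mul_comm]

private lemma delTwo_ne_snd {n : ℕ} {k l : Fin (n + 2)} (hkl : k < l) (m : Fin n) :
    delTwo hkl m ≠ l :=
  Fin.succAbove_ne l _

private lemma delTwo_ne_fst {n : ℕ} {k l : Fin (n + 2)} (hkl : k < l) (m : Fin n) :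
    delTwo hkl m ≠ k := by
  intro h
  have h2 : rhoTwo hkl m.succ.succ = rhoTwo hkl 1 := by
    rw [rhoTwo_succ_succ, rhoTwo_one, h]
  have h3 : m.succ.succ = 1 := (rhoTwo hkl).injective h2
  have h4 : m.succ.succ = Fin.succ 0 := h3
  exact Fin.succ_ne_zero _ (Fin.succ_injective _ h4)

/-- The key polynomial identity, valid over every commutative ring. -/
private lemma dj_key {n : ℕ}
    (M : Matrix (Fin (n + 2)) (Fin (n + 2)) R)
    {i j k l : Fin (n + 2)} (hij : i < j) (hkl : k < l) :
    M.det * (M.det * (M.submatrix (delTwo hij) (delTwo hkl)).det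
      - ((M.submatrix i.succAbove k.succAbove).det *
          (M.submatrix j.succAbove l.succAbove).det
        - (M.submatrix i.succAbove l.succAbove).det *
          (M.submatrix j.succAbove k.succAbove).det)) = 0 := by
  classical
  set d : R := M.det with hd
  have hklne : k ≠ l := ne_of_lt hkl
  set B : Matrix (Fin (n+2)) (Fin (n+2)) R :=
    Matrix.of fun p q => if q = l then adjugate M p j else if q = k then adjugate M p i
      else (1 : Matrix (Fin (n+2)) (Fin (n+2)) R) p q with hB
  have hBapp : ∀ p q, B p q = if q = l then adjugate M p j else if q = k then adjugate M p i
      else (1 : Matrix (Fin (n+2)) (Fin (n+2)) R) p q := fun p q => rfl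
  set N : Matrix (Fin (n+2)) (Fin (n+2)) R := M * B with hN
  have hNapp : ∀ p q, N p q = if q = l then d * (if p = j then 1 else 0)
      else if q = k then d * (if p = i then 1 else 0) else M p q := by
    intro p q
    rw [hN, Matrix.mul_apply]
    by_cases h1 : q = l
    · rw [if_pos h1]
      have hB2 : ∀ r, B r q = adjugate M r j := fun r => by rw [hBapp, if_pos h1]
      calc (∑ r, M p r * B r q) = ∑ r, M p r * adjugate M r j := by simp_rw [hB2]
        _ = (M * adjugate M) p j := (Matrix.mul_apply).symm
        _ = d * (if p = j then 1 else 0) := by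
            rw [Matrix.mul_adjugate, Matrix.smul_apply, Matrix.one_apply, smul_eq_mul, hd]
    · rw [if_neg h1]
      by_cases h2 : q = k
      · rw [if_pos h2]
        have hB2 : ∀ r, B r q = adjugate M r i := fun r => by
          rw [hBapp, if_neg (h2 ▸ hklne : q ≠ l), if_pos h2]
        calc (∑ r, M p r * B r q) = ∑ r, M p r * adjugate M r i := by simp_rw [hB2]
          _ = (M * adjugate M) p i := (Matrix.mul_apply).symm
          _ = d * (if p = i then 1 else 0) := by
              rw [Matrix.mul_adjugate, Matrix.smul_apply, Matrix.one_apply, smul_eq_mul, hd]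
      · rw [if_neg h2]
        have hB2 : ∀ r, B r q = (1 : Matrix (Fin (n+2)) (Fin (n+2)) R) r q := fun r => by
          rw [hBapp, if_neg h1, if_neg h2]
        calc (∑ r, M p r * B r q)
            = ∑ r, M p r * (1 : Matrix (Fin (n+2)) (Fin (n+2)) R) r q := by simp_rw [hB2]
          _ = (M * (1 : Matrix (Fin (n+2)) (Fin (n+2)) R)) p q := (Matrix.mul_apply).symm
          _ = M p q := by rw [Matrix.mul_one]
  set ρI := rhoTwo hij with hρI
  set ρK := rhoTwo hkl with hρK
  set A1 : Matrix (Fin (n+2)) (Fin (n+2)) R := N.submatrix ρI ρK with hA1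
  -- first column of `A1`
  have h0 : ∀ p, A1 p 0 = if p = 0 then d else 0 := by
    intro p
    have : A1 p 0 = N (ρI p) l := by rw [hA1, Matrix.submatrix_apply, rhoTwo_zero]
    rw [this, hNapp, if_pos rfl]
    have hiff : (ρI p = j) ↔ (p = 0) := by
      rw [← rhoTwo_zero hij, ← hρI]
      exact ρI.apply_eq_iff_eq
    rw [if_congr hiff rfl rfl]
    split_ifs <;> ring
  set A2 : Matrix (Fin (n+1)) (Fin (n+1)) R := A1.submatrix Fin.succ Fin.succ with hA2
  have h1 : ∀ p, A2 p 0 = if p = 0 then d else 0 := by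
    intro p
    have e1 : A2 p 0 = N (ρI p.succ) k := by
      rw [hA2, Matrix.submatrix_apply, hA1, Matrix.submatrix_apply]
      congr 1
      have : Fin.succ (0 : Fin (n+1)) = (1 : Fin (n+2)) := rfl
      rw [this, rhoTwo_one]
    rw [e1, hNapp]
    have hkl' : k ≠ l := hklne
    rw [if_neg hkl', if_pos rfl]
    have hiff : (ρI p.succ = i) ↔ (p = 0) := by
      rw [← rhoTwo_one hij, ← hρI]
      rw [ρI.apply_eq_iff_eq]
      constructor
      · intro h; exact Fin.succ_injective _ h
      · intro h; rw [h]; rfl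
    rw [if_congr hiff rfl rfl]
    split_ifs <;> ring
  have hS : A2.submatrix Fin.succ Fin.succ = M.submatrix (delTwo hij) (delTwo hkl) := by
    ext m m'
    rw [hA2]
    simp only [Matrix.submatrix_apply]
    rw [hA1, Matrix.submatrix_apply, rhoTwo_succ_succ, rhoTwo_succ_succ, hNapp]
    rw [if_neg (delTwo_ne_snd hkl m'), if_neg (delTwo_ne_fst hkl m')]
  have E1 : A1.det = d * (d * (M.submatrix (delTwo hij) (delTwo hkl)).det) := by
    rw [det_col_single A1 d h0, ← hA2, det_col_single A2 d h1, hS]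
  -- second computation of `A1.det`
  have E2 : A1.det = ((Equiv.Perm.sign ρI : ℤ) : R) * ((Equiv.Perm.sign ρK : ℤ) : R)
      * (d * B.det) := by
    rw [hA1, det_submatrix_perm, hN, Matrix.det_mul, hd]
  -- determinant of `B`
  set B' : Matrix (Fin (n+2)) (Fin (n+2)) R := B.submatrix ρK ρK with hB'
  have hBdet : B.det = B' 0 0 * B' 1 1 - B' 0 1 * B' 1 0 := by
    rw [show B.det = B'.det from (Matrix.det_submatrix_equiv_self ρK B).symm]
    refine det_unit_tail_two B' ?_
    intro p q hq0 hq1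
    obtain ⟨r, rfl⟩ := Fin.exists_succ_eq.mpr hq0
    have hr0 : r ≠ 0 := by
      intro h; apply hq1; rw [h]; rfl
    obtain ⟨m', rfl⟩ := Fin.exists_succ_eq.mpr hr0
    rw [hB', Matrix.submatrix_apply, rhoTwo_succ_succ, hBapp,
      if_neg (delTwo_ne_snd hkl m'), if_neg (delTwo_ne_fst hkl m'), Matrix.one_apply]
    have hiff : (ρK p = delTwo hkl m') ↔ (p = m'.succ.succ) := by
      rw [hρK, ← rhoTwo_succ_succ hkl (m := m')]
      exact (rhoTwo hkl).apply_eq_iff_eq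
    exact if_congr hiff rfl rfl
  have hB'00 : B' 0 0 = adjugate M l j := by
    rw [hB', Matrix.submatrix_apply, rhoTwo_zero, hBapp, if_pos rfl]
  have hB'11 : B' 1 1 = adjugate M k i := by
    rw [hB', Matrix.submatrix_apply, rhoTwo_one, hBapp, if_neg hklne, if_pos rfl]
  have hB'01 : B' 0 1 = adjugate M l i := by
    rw [hB', Matrix.submatrix_apply, rhoTwo_zero, rhoTwo_one, hBapp, if_neg hklne, if_pos rfl]
  have hB'10 : B' 1 0 = adjugate M k j := by
    rw [hB', Matrix.submatrix_apply, rhoTwo_zero, rhoTwo_one, hBapp, if_pos rfl]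
  -- cofactors
  have hc1 := adj_cofactor M j l
  have hc2 := adj_cofactor M i k
  have hc3 := adj_cofactor M i l
  have hc4 := adj_cofactor M j k
  -- signs
  have hsI : ((Equiv.Perm.sign ρI : ℤ) : R) = (-1:R) ^ ((i:ℕ) + (j:ℕ)) := by
    rw [hρI, sign_rhoTwo]
    push_cast
    ring
  have hsK : ((Equiv.Perm.sign ρK : ℤ) : R) = (-1:R) ^ ((k:ℕ) + (l:ℕ)) := by
    rw [hρK, sign_rhoTwo]
    push_cast
    ring
  have hE : d * (d * (M.submatrix (delTwo hij) (delTwo hkl)).det)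
      = (-1:R) ^ ((i:ℕ) + (j:ℕ)) * (-1:R) ^ ((k:ℕ) + (l:ℕ)) * (d *
        (((-1:R)^((j:ℕ)+(l:ℕ)) * (M.submatrix j.succAbove l.succAbove).det) *
          ((-1:R)^((i:ℕ)+(k:ℕ)) * (M.submatrix i.succAbove k.succAbove).det)
        - ((-1:R)^((i:ℕ)+(l:ℕ)) * (M.submatrix i.succAbove l.succAbove).det) *
          ((-1:R)^((j:ℕ)+(k:ℕ)) * (M.submatrix j.succAbove k.succAbove).det))) := by
    rw [← E1, E2, hsI, hsK, hBdet, hB'00, hB'11, hB'01, hB'10, hc1, hc2, hc3, hc4]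
  have h2E : (-1:R) ^ ((i:ℕ)+(j:ℕ)) * (-1:R) ^ ((k:ℕ)+(l:ℕ)) *
      ((-1:R) ^ ((j:ℕ)+(l:ℕ)) * (-1:R) ^ ((i:ℕ)+(k:ℕ))) = 1 := by
    rw [← pow_add, ← pow_add, ← pow_add]
    exact Even.neg_one_pow ⟨(i:ℕ)+(j:ℕ)+(k:ℕ)+(l:ℕ), by ring⟩
  have h2E' : (-1:R) ^ ((i:ℕ)+(j:ℕ)) * (-1:R) ^ ((k:ℕ)+(l:ℕ)) *
      ((-1:R) ^ ((i:ℕ)+(l:ℕ)) * (-1:R) ^ ((j:ℕ)+(k:ℕ))) = 1 := by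
    rw [← pow_add, ← pow_add, ← pow_add]
    exact Even.neg_one_pow ⟨(i:ℕ)+(j:ℕ)+(k:ℕ)+(l:ℕ), by ring⟩
  linear_combination hE
    + (d * (M.submatrix j.succAbove l.succAbove).det *
        (M.submatrix i.succAbove k.succAbove).det) * h2E
    - (d * (M.submatrix i.succAbove l.succAbove).det *
        (M.submatrix j.succAbove k.succAbove).det) * h2E'

end Aux

/-- **Dodgson/Desnanot–Jacobi identity.**  For an `n×n` matrix `M` over a
commutative ring, rows `i < j` and columns `k < l`:
`det(M)·det(M_{ij,kl}) − det(M_{i,k})·det(M_{j,l}) = −det(M_{i,l})·det(M_{j,k})`. -/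
theorem dodgson_desnanot_jacobi {R : Type*} [CommRing R] {n : ℕ}
    (M : Matrix (Fin (n + 2)) (Fin (n + 2)) R)
    {i j k l : Fin (n + 2)} (hij : i < j) (hkl : k < l) :
    M.det * (M.submatrix (delTwo hij) (delTwo hkl)).det
      - (M.submatrix i.succAbove k.succAbove).det *
        (M.submatrix j.succAbove l.succAbove).det
      = -((M.submatrix i.succAbove l.succAbove).det *
          (M.submatrix j.succAbove k.succAbove).det) := by
  classical
  -- generic matrix over a polynomial ring
  set X := Matrix.mvPolynomialX (Fin (n+2)) (Fin (n+2)) ℤ with hX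
  have hXdet : X.det ≠ 0 := Matrix.det_mvPolynomialX_ne_zero (Fin (n+2)) ℤ
  have hkey := dj_key X hij hkl
  have hgen : X.det * (X.submatrix (delTwo hij) (delTwo hkl)).det
      - (X.submatrix i.succAbove k.succAbove).det *
        (X.submatrix j.succAbove l.succAbove).det
      = -((X.submatrix i.succAbove l.succAbove).det *
          (X.submatrix j.succAbove k.succAbove).det) := by
    have h := mul_eq_zero.mp hkey
    rcases h with h | h
    · exact absurd h hXdet
    · linear_combination h
  -- transfer via the evaluation homomorphism
  set φ : MvPolynomial (Fin (n+2) × Fin (n+2)) ℤ →+* R :=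
    MvPolynomial.eval₂Hom (Int.castRingHom R) (fun p => M p.1 p.2) with hφ
  have hXmap : X.map φ = M := by
    rw [hφ, hX]
    exact Matrix.mvPolynomialX_map_eval₂ (Int.castRingHom R) M
  have := congrArg φ hgen
  simp only [map_sub, _root_.map_mul, map_neg, RingHom.map_det, RingHom.mapMatrix_apply] at this
  rw [← Matrix.submatrix_map, ← Matrix.submatrix_map, ← Matrix.submatrix_map,
    ← Matrix.submatrix_map, ← Matrix.submatrix_map, hXmap] at this
  exact this
end

section
/- Let L be the Laplacian of a weighted graph on n ≥ 4 vertices. Then det(L_{12,13}) + det(L_{12,14}) = det(L_{12,34}), where L_{U,W} denotes the submatrix of L obtained by deleting the rows in U and the columns in W (remaining rows and columns kept in increasing order). -/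
open Finset

/-- The graph Laplacian of a weighted graph on `{1,…,N}`. -/
noncomputable def lapl {N : ℕ} (γ : Fin N → Fin N → ℝ) : Matrix (Fin N) (Fin N) ℝ :=
  Matrix.of fun i j =>
    if i = j then -(∑ k ∈ univ.filter (fun k => k ≠ i), γ i k) else γ i j

set_option maxHeartbeats 1000000 in
lemma delTwo_val {n : ℕ} {i j : Fin (n + 2)} (h : i < j) (m : Fin n) :
    (delTwo h m : ℕ) =
      if (m : ℕ) < (i : ℕ) then (m : ℕ)
      else if (m : ℕ) + 1 < (j : ℕ) then (m : ℕ) + 1 else (m : ℕ) + 2 := by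
  have hij : (i : ℕ) < (j : ℕ) := h
  simp only [delTwo, Fin.succAbove, Fin.lt_def, Fin.coe_castSucc, Fin.val_succ]
  split_ifs <;> simp only [Fin.coe_castSucc, Fin.val_succ] at * <;> omega

lemma lapl_symm {N : ℕ} (γ : Fin N → Fin N → ℝ) (hsym : ∀ a b, γ a b = γ b a)
    (a b : Fin N) : lapl γ a b = lapl γ b a := by
  simp only [lapl, Matrix.of_apply]
  rcases eq_or_ne a b with rfl | hab
  · rfl
  · rw [if_neg hab, if_neg hab.symm, hsym]

lemma lapl_colsum {N : ℕ} (γ : Fin N → Fin N → ℝ) (hsym : ∀ a b, γ a b = γ b a)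
    (w : Fin N) : ∑ v, lapl γ v w = 0 := by
  rw [← Finset.add_sum_erase _ _ (Finset.mem_univ w)]
  have h1 : lapl γ w w = -(∑ k ∈ univ.erase w, γ w k) := by
    simp [lapl, Finset.filter_ne']
  have h2 : ∑ v ∈ univ.erase w, lapl γ v w = ∑ v ∈ univ.erase w, γ w v := by
    refine Finset.sum_congr rfl fun v hv => ?_
    have hvw : v ≠ w := Finset.ne_of_mem_erase hv
    simp [lapl, hvw, hsym]
  rw [h1, h2]; ring

lemma aux_minor {n : ℕ} (L : Matrix (Fin (n + 4)) (Fin (n + 4)) ℝ)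
    (hsymm : ∀ a b, L a b = L b a) (hcol : ∀ w, ∑ v, L v w = 0)
    (r cA cB cC : Fin (n + 2) → Fin (n + 4))
    (hvr : ∀ m, (r m : ℕ) = (m : ℕ) + 2)
    (hvA : ∀ m, (cA m : ℕ) = if (m : ℕ) + 1 < 2 then (m : ℕ) + 1 else (m : ℕ) + 2)
    (hvB : ∀ m, (cB m : ℕ) = if (m : ℕ) + 1 < 3 then (m : ℕ) + 1 else (m : ℕ) + 2)
    (hvC : ∀ m, (cC m : ℕ) = if (m : ℕ) < 2 then (m : ℕ) else (m : ℕ) + 2) :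
    (L.submatrix r cA).det + (L.submatrix r cB).det = (L.submatrix r cC).det := by
  -- transpose trick: swap the roles of rows and columns
  have htr : ∀ c : Fin (n + 2) → Fin (n + 4),
      ((L.submatrix r c).det) = (L.submatrix c r).det := by
    intro c
    rw [← Matrix.det_transpose (L.submatrix c r)]
    congr 1
    ext i j
    simp [Matrix.transpose_apply, hsymm]
  rw [htr, htr, htr]
  set M : Matrix (Fin (n + 2)) (Fin (n + 2)) ℝ := L.submatrix cC r with hM
  -- sum of the rows of M
  have h23 : (⟨2, by omega⟩ : Fin (n + 4)) < ⟨3, by omega⟩ := Fin.mk_lt_mk.mpr (by omega)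
  have hsum : ∑ k, M k
      = -(fun j => L ⟨2, by omega⟩ (r j)) - (fun j => L ⟨3, by omega⟩ (r j)) := by
    funext j
    have h0 : ∑ v, L v (r j) = 0 := hcol (r j)
    rw [Fin.sum_univ_succAbove (fun v => L v (r j)) ⟨3, by omega⟩] at h0
    rw [Fin.sum_univ_succAbove (fun x => L ((⟨3, by omega⟩ : Fin (n + 4)).succAbove x) (r j))
      ⟨2, by omega⟩] at h0
    have he : ∀ m : Fin (n + 2),
        (⟨3, by omega⟩ : Fin (n + 4)).succAbove ((⟨2, by omega⟩ : Fin (n + 3)).succAbove m)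
          = cC m := by
      intro m
      apply Fin.ext
      have : (⟨3, by omega⟩ : Fin (n + 4)).succAbove ((⟨2, by omega⟩ : Fin (n + 3)).succAbove m)
          = delTwo h23 m := rfl
      rw [this, delTwo_val, hvC]
      simp only [Fin.val_one, Fin.val_zero]
      split_ifs <;> simp_all <;> omega
    have he2 : (⟨3, by omega⟩ : Fin (n + 4)).succAbove ⟨2, by omega⟩ = ⟨2, by omega⟩ := by
      simp [Fin.succAbove, Fin.lt_def]
    simp only [he, he2] at h0
    have hMj : ∑ m, M m j = ∑ m, L (cC m) (r j) := rfl
    simp only [Finset.sum_apply, Pi.neg_apply, Pi.sub_apply, hMj]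
    have hs : (∑ k, M k) j = ∑ k, M k j := Finset.sum_apply _ _ _
    linarith
  -- determinant manipulation
  have key : M.det = (M.updateRow 0 (∑ k, M k)).det := by
    have h := Matrix.det_updateRow_sum M 0 (fun _ => (1 : ℝ))
    simp only [one_smul, smul_eq_mul, one_mul] at h
    exact h.symm
  have hsplit : (M.updateRow 0 (∑ k, M k)).det
      = -(M.updateRow 0 (fun j => L ⟨2, by omega⟩ (r j))).det
        - (M.updateRow 0 (fun j => L ⟨3, by omega⟩ (r j))).det := by
    rw [hsum]
    have hfun : (-(fun j => L ⟨2, by omega⟩ (r j)) - (fun j => L ⟨3, by omega⟩ (r j)) :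
        Fin (n + 2) → ℝ)
        = ((-1 : ℝ) • fun j => L ⟨2, by omega⟩ (r j))
          + ((-1 : ℝ) • fun j => L ⟨3, by omega⟩ (r j)) := by
      funext x; simp; ring
    rw [hfun, Matrix.det_updateRow_add, Matrix.det_updateRow_smul, Matrix.det_updateRow_smul]
    ring
  have hne01 : (0 : Fin (n + 2)) ≠ 1 := by simp [Fin.ext_iff]
  have hge2 : ∀ i : Fin (n + 2), i ≠ 0 → i ≠ 1 → 2 ≤ (i : ℕ) := by
    intro i hi0 hi1
    rcases Nat.lt_or_ge (i : ℕ) 2 with h | h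
    · exfalso
      interval_cases hh : (i : ℕ)
      · exact hi0 (Fin.ext hh)
      · exact hi1 (Fin.ext hh)
    · exact h
  have hsw : ∀ i : Fin (n + 2), i ≠ 0 →
      Equiv.swap (0 : Fin (n + 2)) 1 i = if i = 1 then 0 else i := by
    intro i hi0
    rcases eq_or_ne i 1 with rfl | hi1
    · simp
    · simp [Equiv.swap_apply_of_ne_of_ne hi0 hi1, hi1]
  -- identify the two updated matrices as row swaps
  have hswapB : M.updateRow 0 (fun j => L ⟨2, by omega⟩ (r j))
      = (L.submatrix cB r).submatrix (Equiv.swap 0 1) id := by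
    ext i j
    rcases eq_or_ne i 0 with rfl | hi0
    · have hc : cB (1 : Fin (n + 2)) = ⟨2, by omega⟩ := by
        apply Fin.ext
        rw [hvB]; norm_num
      simp [Matrix.submatrix_apply, Equiv.swap_apply_left, hc]
    · have hcc : cB (Equiv.swap (0 : Fin (n + 2)) 1 i) = cC i := by
        apply Fin.ext
        rw [hsw i hi0]
        rcases eq_or_ne i 1 with rfl | hi1
        · rw [if_pos rfl, hvB, hvC]; norm_num
        · rw [if_neg hi1, hvB, hvC]
          have := hge2 i hi0 hi1
          split_ifs <;> omega
      simp [Matrix.updateRow_ne hi0, Matrix.submatrix_apply, hcc, hM]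
  have hswapA : M.updateRow 0 (fun j => L ⟨3, by omega⟩ (r j))
      = (L.submatrix cA r).submatrix (Equiv.swap 0 1) id := by
    ext i j
    rcases eq_or_ne i 0 with rfl | hi0
    · have hc : cA (1 : Fin (n + 2)) = ⟨3, by omega⟩ := by
        apply Fin.ext
        rw [hvA]; norm_num
      simp [Matrix.submatrix_apply, Equiv.swap_apply_left, hc]
    · have hcc : cA (Equiv.swap (0 : Fin (n + 2)) 1 i) = cC i := by
        apply Fin.ext
        rw [hsw i hi0]
        rcases eq_or_ne i 1 with rfl | hi1
        · rw [if_pos rfl, hvA, hvC]; norm_num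
        · rw [if_neg hi1, hvA, hvC]
          have := hge2 i hi0 hi1
          split_ifs <;> omega
      simp [Matrix.updateRow_ne hi0, Matrix.submatrix_apply, hcc, hM]
  have hdetB : ((L.submatrix cB r).submatrix (Equiv.swap 0 1) id).det
      = -(L.submatrix cB r).det := by
    rw [Matrix.det_permute, Equiv.Perm.sign_swap hne01]; push_cast; ring
  have hdetA : ((L.submatrix cA r).submatrix (Equiv.swap 0 1) id).det
      = -(L.submatrix cA r).det := by
    rw [Matrix.det_permute, Equiv.Perm.sign_swap hne01]; push_cast; ring
  rw [key, hsplit, hswapA, hswapB, hdetA, hdetB]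
  ring

/-- **A linear relation among minors of a graph Laplacian:**
`det L_{12,13} + det L_{12,14} = det L_{12,34}` for the Laplacian of any
weighted graph on `n + 4 ≥ 4` vertices (vertices `1,2,3,4` are the indices
`0,1,2,3` of `Fin (n+4)`). -/
theorem laplacian_minor_linear_relation
    {n : ℕ} (γ : Fin (n + 4) → Fin (n + 4) → ℝ)
    (hsym : ∀ a b, γ a b = γ b a) (hdiag : ∀ a, γ a a = 0) :
    ((lapl γ).submatrix
        (delTwo (show (⟨0, by omega⟩ : Fin (n + 4)) < ⟨1, by omega⟩ from
          Fin.mk_lt_mk.mpr (by omega)))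
        (delTwo (show (⟨0, by omega⟩ : Fin (n + 4)) < ⟨2, by omega⟩ from
          Fin.mk_lt_mk.mpr (by omega)))).det
      + ((lapl γ).submatrix
        (delTwo (show (⟨0, by omega⟩ : Fin (n + 4)) < ⟨1, by omega⟩ from
          Fin.mk_lt_mk.mpr (by omega)))
        (delTwo (show (⟨0, by omega⟩ : Fin (n + 4)) < ⟨3, by omega⟩ from
          Fin.mk_lt_mk.mpr (by omega)))).det
      = ((lapl γ).submatrix
        (delTwo (show (⟨0, by omega⟩ : Fin (n + 4)) < ⟨1, by omega⟩ from
          Fin.mk_lt_mk.mpr (by omega)))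
        (delTwo (show (⟨2, by omega⟩ : Fin (n + 4)) < ⟨3, by omega⟩ from
          Fin.mk_lt_mk.mpr (by omega)))).det := by
  refine aux_minor (lapl γ) (lapl_symm γ hsym) (lapl_colsum γ hsym) _ _ _ _
    (fun m => ?_) (fun m => ?_) (fun m => ?_) (fun m => ?_) <;>
  · rw [delTwo_val]
    simp only [Fin.val_zero, Fin.val_one]
    split_ifs <;> omega
end

section
/- Let Γ be a connected graph with N vertices and E edges, arbitrarily oriented, of co-rank c = E − N + 1, and let F be a c×E integer matrix whose rows form a basis of the cycle space of Γ (the kernel of the N×E signed incidence matrix) as a lattice over ℤ. For any set S̃ of c edges, let F_{S̃} be the c×c submatrix of F consisting of the columns indexed by S̃. Then det(F_{S̃}) ∈ {−1, 0, 1}; moreover det(F_{S̃}) = ±1 if the graph obtained from Γ by deleting the edges in S̃ is a spanning tree, and det(F_{S̃}) = 0 otherwise. -/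
open Finset

open Classical in
noncomputable def cbStep {N E : ℕ} (tail head : Fin E → Fin N) (S : Finset (Fin E))
    (a b : Fin N) : Fin E → ℤ :=
  if h : ∃ e, e ∉ S ∧ tail e = a ∧ head e = b then Pi.single h.choose 1
  else if h' : ∃ e, e ∉ S ∧ tail e = b ∧ head e = a then - Pi.single h'.choose 1
  else 0

lemma cbStep_spec {N E : ℕ} (tail head : Fin E → Fin N) (S : Finset (Fin E)) {a b : Fin N}
    (h : (∃ e, e ∉ S ∧ tail e = a ∧ head e = b) ∨ (∃ e, e ∉ S ∧ tail e = b ∧ head e = a)) :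
    ∃ e, e ∉ S ∧
      ((tail e = a ∧ head e = b ∧ cbStep tail head S a b = Pi.single e 1) ∨
       (tail e = b ∧ head e = a ∧ cbStep tail head S a b = - Pi.single e 1)) := by
  unfold cbStep
  split_ifs with h1 h2
  · exact ⟨h1.choose, h1.choose_spec.1, Or.inl ⟨h1.choose_spec.2.1, h1.choose_spec.2.2, rfl⟩⟩
  · exact ⟨h2.choose, h2.choose_spec.1, Or.inr ⟨h2.choose_spec.2.1, h2.choose_spec.2.2, rfl⟩⟩
  · rcases h with h | h
    exacts [absurd h h1, absurd h h2]

lemma cbStep_apply_mem {N E : ℕ} (tail head : Fin E → Fin N) (S : Finset (Fin E))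
    {a b : Fin N} {e : Fin E} (he : e ∈ S) : cbStep tail head S a b e = 0 := by
  unfold cbStep
  split_ifs with h1 h2
  · have hne : e ≠ h1.choose := by rintro rfl; exact h1.choose_spec.1 he
    exact Pi.single_eq_of_ne hne 1
  · have hne : e ≠ h2.choose := by rintro rfl; exact h2.choose_spec.1 he
    simp [Pi.single_eq_of_ne hne]
  · rfl

noncomputable def cbFlow {N E : ℕ} (tail head : Fin E → Fin N) (S : Finset (Fin E))
    {G' : SimpleGraph (Fin N)} : {a b : Fin N} → G'.Walk a b → (Fin E → ℤ)
  | _, _, SimpleGraph.Walk.nil => 0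
  | a, _, SimpleGraph.Walk.cons (v := v) _ p => cbStep tail head S a v + cbFlow tail head S p

lemma cbFlow_apply_mem {N E : ℕ} (tail head : Fin E → Fin N) (S : Finset (Fin E))
    {G' : SimpleGraph (Fin N)} {a b : Fin N} (w : G'.Walk a b) {e : Fin E} (he : e ∈ S) :
    cbFlow tail head S w e = 0 := by
  induction w with
  | nil => rfl
  | cons h p ih => simp [cbFlow, cbStep_apply_mem tail head S he, ih]

lemma cbFlow_apply_not_mem_edges {N E : ℕ} (tail head : Fin E → Fin N) (S : Finset (Fin E))
    {G' : SimpleGraph (Fin N)}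
    (hG' : ∀ a b, G'.Adj a b →
      ((∃ e, e ∉ S ∧ tail e = a ∧ head e = b) ∨ (∃ e, e ∉ S ∧ tail e = b ∧ head e = a)))
    {a b : Fin N} (w : G'.Walk a b) {e : Fin E}
    (he : s(tail e, head e) ∉ w.edges) : cbFlow tail head S w e = 0 := by
  induction w with
  | nil => rfl
  | @cons u v x h p ih =>
    rw [SimpleGraph.Walk.edges_cons, List.mem_cons, not_or] at he
    have hstep : cbStep tail head S u v e = 0 := by
      obtain ⟨e', he'S, hcase⟩ := cbStep_spec tail head S (hG' u v h)
      have hne : e ≠ e' := by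
        rintro rfl
        rcases hcase with ⟨h1, h2, -⟩ | ⟨h1, h2, -⟩
        · exact he.1 (by rw [h1, h2])
        · exact he.1 (by rw [h1, h2]; exact Sym2.eq_swap)
      rcases hcase with ⟨-, -, h3⟩ | ⟨-, -, h3⟩ <;> simp [h3, Pi.single_eq_of_ne hne]
    simp [cbFlow, hstep, ih he.2]

lemma incidence_col {N E : ℕ} {tail head : Fin E → Fin N} (hloop : ∀ e, tail e ≠ head e)
    {D : Matrix (Fin N) (Fin E) ℤ}
    (hD : ∀ v e, D v e = if v = head e then 1 else if v = tail e then -1 else 0) (e : Fin E) :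
    (fun v => D v e) = (Pi.single (head e) 1 - Pi.single (tail e) 1 : Fin N → ℤ) := by
  funext v
  by_cases h1 : v = head e
  · subst h1
    simp [hD, Pi.single_apply, (hloop e).symm, Ne.symm (hloop e)]
  · by_cases h2 : v = tail e
    · subst h2
      simp [hD, Pi.single_apply, h1, hloop e]
    · simp [hD, Pi.single_apply, h1, h2]

lemma mulVec_single_col {N E : ℕ} (D : Matrix (Fin N) (Fin E) ℤ) (e : Fin E) :
    D.mulVec (Pi.single e 1) = fun v => D v e := by
  funext v
  simp [Matrix.mulVec, dotProduct, Pi.single_apply, mul_ite, Finset.sum_ite_eq']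

lemma cbFlow_mulVec {N E : ℕ} {tail head : Fin E → Fin N} {S : Finset (Fin E)}
    (hloop : ∀ e, tail e ≠ head e)
    {D : Matrix (Fin N) (Fin E) ℤ}
    (hD : ∀ v e, D v e = if v = head e then 1 else if v = tail e then -1 else 0)
    {G' : SimpleGraph (Fin N)}
    (hG' : ∀ a b, G'.Adj a b →
      ((∃ e, e ∉ S ∧ tail e = a ∧ head e = b) ∨ (∃ e, e ∉ S ∧ tail e = b ∧ head e = a)))
    {a b : Fin N} (w : G'.Walk a b) :
    D.mulVec (cbFlow tail head S w) = Pi.single b 1 - Pi.single a 1 := by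
  induction w with
  | nil => simp [cbFlow]
  | @cons u v x h p ih =>
    have hstep : D.mulVec (cbStep tail head S u v) = Pi.single v 1 - Pi.single u 1 := by
      obtain ⟨e', -, hcase⟩ := cbStep_spec tail head S (hG' u v h)
      rcases hcase with ⟨h1, h2, h3⟩ | ⟨h1, h2, h3⟩
      · rw [h3, mulVec_single_col, incidence_col hloop hD, h1, h2]
      · rw [h3, Matrix.mulVec_neg, mulVec_single_col, incidence_col hloop hD, h1, h2]
        abel
    show D.mulVec (cbStep tail head S u v + cbFlow tail head S p) = _
    rw [Matrix.mulVec_add, hstep, ih]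
    abel

lemma int_det_eq_zero_of_vecMul {n : ℕ} (M : Matrix (Fin n) (Fin n) ℤ) (a : Fin n → ℤ)
    (ha : a ≠ 0) (h : Matrix.vecMul a M = 0) : M.det = 0 :=
  Matrix.exists_vecMul_eq_zero_iff.mp ⟨a, ha, h⟩

lemma int_det_eq_zero_of_mulVec {n : ℕ} (M : Matrix (Fin n) (Fin n) ℤ) (a : Fin n → ℤ)
    (ha : a ≠ 0) (h : M.mulVec a = 0) : M.det = 0 :=
  Matrix.exists_mulVec_eq_zero_iff.mp ⟨a, ha, h⟩

lemma reachable_const {V : Type*} {G : SimpleGraph V} {y : V → ℤ}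
    (hy : ∀ a b, G.Adj a b → y a = y b) {u w : V} (h : G.Reachable u w) : y u = y w := by
  obtain ⟨p⟩ := h
  induction p with
  | nil => rfl
  | cons h p ih => exact (hy _ _ h).trans ih


/-- **Determinants of column-submatrices of an integral cycle basis.**
Let `Γ` be a connected oriented simple graph with `N` vertices, `E` edges and
co-rank `c = E − N + 1`, with signed incidence matrix `D`, and let the rows of
the `c × E` integer matrix `F` form a ℤ-basis of the cycle lattice
`ker D ∩ ℤ^E`.  For a set `S̃` of `c` edges, let `F_{S̃}` be the `c × c`
submatrix of the columns indexed by `S̃`.  Then `det F_{S̃} ∈ {−1, 0, 1}`: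
it is `±1` if deleting the edges of `S̃` from `Γ` leaves a spanning tree, and
`0` otherwise. -/
theorem cycle_basis_submatrix_det
    {N E c : ℕ} (hc : c + N = E + 1)
    (tail head : Fin E → Fin N) (hloop : ∀ e, tail e ≠ head e)
    (hsimple : ∀ e e', s(tail e, head e) = s(tail e', head e') → e = e')
    (hconn : (SimpleGraph.fromRel fun a b => ∃ e, tail e = a ∧ head e = b).Connected)
    (D : Matrix (Fin N) (Fin E) ℤ)
    (hD : ∀ v e, D v e = if v = head e then 1 else if v = tail e then -1 else 0)
    (F : Matrix (Fin c) (Fin E) ℤ)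
    (hker : ∀ r, D.mulVec (F r) = 0)
    (hspan : ∀ x : Fin E → ℤ, D.mulVec x = 0 →
        ∃ a : Fin c → ℤ, x = ∑ r : Fin c, a r • F r)
    (hindep : LinearIndependent ℤ (fun r : Fin c => F r))
    (S : Finset (Fin E)) (hS : S.card = c)
    (FS : Matrix (Fin c) (Fin c) ℤ)
    (hFS : FS = F.submatrix id (fun m => ((S.orderIsoOfFin hS m : S) : Fin E))) :
    FS.det ∈ ({-1, 0, 1} : Set ℤ) ∧
    ((SimpleGraph.fromRel fun a b =>
        ∃ e, e ∉ S ∧ tail e = a ∧ head e = b).IsTree →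
      FS.det = 1 ∨ FS.det = -1) ∧
    (¬ (SimpleGraph.fromRel fun a b =>
        ∃ e, e ∉ S ∧ tail e = a ∧ head e = b).IsTree →
      FS.det = 0) := by
  classical
  set ι : Fin c → Fin E := fun m => ((S.orderIsoOfFin hS m : S) : Fin E) with hιdef
  have hιS : ∀ m, ι m ∈ S := fun m => (S.orderIsoOfFin hS m).2
  have hιinj : Function.Injective ι := fun m m' h =>
    (S.orderIsoOfFin hS).injective (Subtype.coe_injective h)
  set G' := SimpleGraph.fromRel (fun a b => ∃ e, e ∉ S ∧ tail e = a ∧ head e = b)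
    with hG'def
  have hG' : ∀ a b, G'.Adj a b →
      ((∃ e, e ∉ S ∧ tail e = a ∧ head e = b) ∨ (∃ e, e ∉ S ∧ tail e = b ∧ head e = a)) :=
    fun a b h => ((SimpleGraph.fromRel_adj _ a b).mp h).2
  have hFSapply : ∀ r m, FS r m = F r (ι m) := by
    intro r m; rw [hFS]; rfl
  -- sums over S as sums over Fin c
  have hsumS : ∀ g : Fin E → ℤ, ∑ m : Fin c, g (ι m) = ∑ e ∈ S, g e := by
    intro g
    rw [← Finset.sum_coe_sort S g]
    exact Fintype.sum_equiv (S.orderIsoOfFin hS).toEquiv _ _ (fun m => rfl)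
  -- Part 1 : tree ⟹ det = ±1
  have htree : G'.IsTree → FS.det = 1 ∨ FS.det = -1 := by
    intro hT
    have hconn' : G'.Connected := hT.isConnected
    have key : ∀ m : Fin c, ∃ a : Fin c → ℤ, Matrix.vecMul a FS = Pi.single m 1 := by
      intro m
      obtain ⟨p⟩ := hconn'.preconnected (head (ι m)) (tail (ι m))
      set z : Fin E → ℤ := Pi.single (ι m) 1 + cbFlow tail head S p with hzdef
      have hzker : D.mulVec z = 0 := by
        rw [hzdef, Matrix.mulVec_add, mulVec_single_col, incidence_col hloop hD,
          cbFlow_mulVec hloop hD hG']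
        abel
      obtain ⟨a, haz⟩ := hspan z hzker
      refine ⟨a, ?_⟩
      funext m'
      have h1 : Matrix.vecMul a FS m' = z (ι m') := by
        rw [haz]
        simp only [Matrix.vecMul, dotProduct, Finset.sum_apply, Pi.smul_apply,
          smul_eq_mul, hFSapply]
      rw [h1, hzdef]
      have h2 : cbFlow tail head S p (ι m') = 0 := cbFlow_apply_mem tail head S p (hιS m')
      have h3 : (Pi.single (ι m) 1 : Fin E → ℤ) (ι m') = (Pi.single m 1 : Fin c → ℤ) m' := by
        by_cases h : m' = m
        · subst h; simp
        · rw [Pi.single_eq_of_ne (fun hh => h (hιinj hh)), Pi.single_eq_of_ne h]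
      simp [h2, h3]
    choose A hA using key
    have hAFS : Matrix.of A * FS = 1 := by
      ext m m'
      have := congrFun (hA m) m'
      simp only [Matrix.vecMul, dotProduct] at this
      rw [Matrix.mul_apply]
      simp only [Matrix.of_apply]
      rw [this, Matrix.one_apply, Pi.single_apply]
      by_cases h : m' = m
      · subst h; simp
      · simp [h, Ne.symm h]
    have : IsUnit FS.det := by
      apply IsUnit.of_mul_eq_one (a := FS.det) (Matrix.of A).det
      rw [mul_comm, ← Matrix.det_mul, hAFS, Matrix.det_one]
    exact Int.isUnit_iff.mp this
  -- Part 2 : not tree ⟹ det = 0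
  have hnottree : ¬ G'.IsTree → FS.det = 0 := by
    intro hT
    by_cases hconn' : G'.Connected
    · -- connected but not acyclic : there is a cycle
      have hacyc : ¬ G'.IsAcyclic := fun h => hT ⟨hconn', h⟩
      simp only [SimpleGraph.IsAcyclic, not_forall, not_not] at hacyc
      obtain ⟨v, w, hw⟩ := hacyc
      cases w with
      | nil => exact absurd rfl hw.ne_nil
      | @cons _ b _ h p =>
        obtain ⟨e0, he0S, hcase⟩ := cbStep_spec tail head S (hG' v b h)
        have hsym : s(tail e0, head e0) = s(v, b) := by
          rcases hcase with ⟨h1, h2, -⟩ | ⟨h1, h2, -⟩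
          · rw [h1, h2]
          · rw [h1, h2]; exact Sym2.eq_swap
        set x : Fin E → ℤ := cbFlow tail head S (SimpleGraph.Walk.cons h p) with hxdef
        have hxker : D.mulVec x = 0 := by
          rw [hxdef, cbFlow_mulVec hloop hD hG']; abel
        have hnot : s(tail e0, head e0) ∉ p.edges := by
          rw [hsym]
          have := hw.edges_nodup
          rw [SimpleGraph.Walk.edges_cons] at this
          exact (List.nodup_cons.mp this).1
        have hx0 : x e0 ≠ 0 := by
          have hflow : cbFlow tail head S p e0 = 0 :=
            cbFlow_apply_not_mem_edges tail head S hG' p hnot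
          have : x e0 = cbStep tail head S v b e0 + cbFlow tail head S p e0 := rfl
          rw [this, hflow, add_zero]
          rcases hcase with ⟨-, -, h3⟩ | ⟨-, -, h3⟩ <;> simp [h3]
        obtain ⟨a, hax⟩ := hspan x hxker
        have ha : a ≠ 0 := by
          intro h0
          rw [h0] at hax
          simp at hax
          rw [hax] at hx0
          exact hx0 rfl
        apply int_det_eq_zero_of_vecMul FS a ha
        funext m
        have h1 : Matrix.vecMul a FS m = x (ι m) := by
          rw [hax]
          simp only [Matrix.vecMul, dotProduct, Finset.sum_apply, Pi.smul_apply,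
            smul_eq_mul, hFSapply]
        rw [Pi.zero_apply, h1, hxdef]
        exact cbFlow_apply_mem tail head S _ (hιS m)
    · -- disconnected
      have hne : Nonempty (Fin N) := hconn.nonempty
      rw [SimpleGraph.connected_iff] at hconn'
      push_neg at hconn' 
      have hpre : ¬ G'.Preconnected := fun h => (hconn' h).elim hne.some
      simp only [SimpleGraph.Preconnected, not_forall] at hpre
      obtain ⟨u, w, hnr⟩ := hpre
      set y : Fin N → ℤ := fun v => if G'.Reachable u v then 1 else 0 with hydef
      have hyadj : ∀ a b, G'.Adj a b → y a = y b := by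
        intro a b hab
        have hiff : G'.Reachable u a ↔ G'.Reachable u b :=
          ⟨fun hr => hr.trans hab.reachable, fun hr => hr.trans hab.symm.reachable⟩
        simp only [hydef, hiff]
      have hyE : ∀ e, e ∉ S → y (head e) = y (tail e) := by
        intro e he
        have hadj : G'.Adj (tail e) (head e) :=
          (SimpleGraph.fromRel_adj _ _ _).mpr ⟨hloop e, Or.inl ⟨e, he, rfl, rfl⟩⟩
        exact (hyadj _ _ hadj).symm
      set uvec : Fin E → ℤ := fun e => y (head e) - y (tail e) with huvdef
      have hucol : ∀ e, ∑ v, y v * D v e = uvec e := by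
        intro e
        have hce := incidence_col hloop hD e
        calc ∑ v, y v * D v e
            = ∑ v, y v * (Pi.single (head e) 1 - Pi.single (tail e) 1 : Fin N → ℤ) v := by
              refine Finset.sum_congr rfl fun v _ => ?_
              rw [← congrFun hce v]
          _ = ∑ v, (y v * (Pi.single (head e) 1 : Fin N → ℤ) v - y v * (Pi.single (tail e) 1 : Fin N → ℤ) v) := by
              simp [mul_sub]
          _ = uvec e := by
              rw [Finset.sum_sub_distrib, huvdef]
              simp [Pi.single_apply, mul_ite]
      have hrel : ∀ r, ∑ e, uvec e * F r e = 0 := by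
        intro r
        have h0 : ∑ v, y v * (D.mulVec (F r)) v = 0 := by rw [hker r]; simp
        calc ∑ e, uvec e * F r e
            = ∑ e, (∑ v, y v * D v e) * F r e := by
              refine Finset.sum_congr rfl fun e _ => ?_; rw [hucol e]
          _ = ∑ e, ∑ v, y v * D v e * F r e := by
              refine Finset.sum_congr rfl fun e _ => ?_; rw [Finset.sum_mul]
          _ = ∑ v, ∑ e, y v * D v e * F r e := Finset.sum_comm
          _ = ∑ v, y v * (D.mulVec (F r)) v := by
              refine Finset.sum_congr rfl fun v _ => ?_
              simp [Matrix.mulVec, dotProduct, Finset.mul_sum, mul_assoc]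
          _ = 0 := h0
      have huzero : ∀ e, e ∉ S → uvec e = 0 := by
        intro e he; rw [huvdef]; simp [hyE e he]
      -- crossing edge
      have hcross : ∃ e ∈ S, uvec e ≠ 0 := by
        by_contra hall
        push_neg at hall
        have hally : ∀ a b,
            (SimpleGraph.fromRel fun a b => ∃ e, tail e = a ∧ head e = b).Adj a b →
            y a = y b := by
          intro a b hab
          obtain ⟨-, hr⟩ := (SimpleGraph.fromRel_adj _ _ _).mp hab
          have key : ∀ e : Fin E, y (head e) = y (tail e) := by
            intro e
            by_cases he : e ∈ S
            · have := hall e he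
              rw [huvdef] at this
              simp only [ne_eq, not_not] at this
              linarith [sub_eq_zero.mp (by simpa using this)]
            · exact hyE e he
          rcases hr with ⟨e, h1, h2⟩ | ⟨e, h1, h2⟩
          · rw [← h1, ← h2]; exact (key e).symm
          · rw [← h1, ← h2]; exact key e
        have := reachable_const hally (hconn.preconnected u w)
        rw [hydef] at this
        simp only [if_pos (SimpleGraph.Reachable.refl u), if_neg hnr] at this
        exact one_ne_zero this
      obtain ⟨e, heS, hue⟩ := hcross
      set u' : Fin c → ℤ := fun m => uvec (ι m) with hu'def
      have hu'ne : u' ≠ 0 := by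
        intro h0
        set m := (S.orderIsoOfFin hS).symm ⟨e, heS⟩ with hmdef
        have : ι m = e := by
          rw [hιdef, hmdef]
          simp
        apply hue
        rw [← this]
        exact congrFun h0 m
      apply int_det_eq_zero_of_mulVec FS u' hu'ne
      funext r
      have h1 : FS.mulVec u' r = ∑ e ∈ S, F r e * uvec e := by
        rw [← hsumS (fun e => F r e * uvec e)]
        simp only [Matrix.mulVec, dotProduct, hFSapply, hu'def]
      rw [Pi.zero_apply, h1]
      rw [Finset.sum_subset (Finset.subset_univ S)
        (fun e _ he => by rw [huzero e he, mul_zero])]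
      rw [← hrel r]
      exact Finset.sum_congr rfl fun e _ => mul_comm _ _
  refine ⟨?_, htree, hnottree⟩
  by_cases hT : G'.IsTree
  · rcases htree hT with h | h <;> rw [h] <;> simp
  · rw [hnottree hT]; simp
end

section
/- Let R ≥ 2 and let A : {0,1}^R → ℝ with A_b ≠ 0 for every b ∈ {0,1}^R, and let P(x_1,…,x_R) = Σ_{b ∈ {0,1}^R} A_b Π_{m : b_m = 1} x_m. Then P factors completely into R linear factors, P(x) = α·Π_{m=1}^R (C_m x_m + 1) for some real α, C_1,…,C_R (equivalently, the zero set of P decomposes as a union of R hyperplanes each of the form {x_m = const}), if and only if Δ_w = 0 for every w ∈ W_R, where for the wildcard w with wildcard slots i < j and base sequence b (w with both wildcard slots set to 0) the discriminant is Δ_w = A_b·A_{b+e_i+e_j} − A_{b+e_i}·A_{b+e_j}. -/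
/-!
Since `α ∏ₘ (Cₘ xₘ + 1) = ∑_S (α ∏_{m ∈ S} Cₘ) ∏_{m ∈ S} xₘ`, and the coefficients of a multilinear
polynomial function are determined by its values on `0/1` vectors, `P` factors exactly when its
coefficients have the product form `A_S = α ∏_{m ∈ S} Cₘ`. Product-form coefficients satisfy every
discriminant relation. Conversely, when all `A_S ≠ 0` and the stacked-deck discriminants vanish,
`A_S = A_∅ ∏_{m ∈ S} A_{m} / A_∅` by induction on `S`: if `i < j` are the two smallest elements of
`S = T ∪ {i, j}`, the discriminant relation with base `T` gives
`A_S = A_{T ∪ {i}} A_{T ∪ {j}} / A_T`.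
-/

open Finset

section Coefficients

variable {ι K : Type*} [Fintype ι] [CommRing K]

/-- Evaluating at the indicator vector of `t` picks out `∑_{s ⊆ t} a s`, so the coefficients are
recovered from the values by induction on `t`. -/
theorem eq_of_forall_sum_mul_prod_eq {a a' : Finset ι → K}
    (h : ∀ x : ι → K, ∑ s, a s * ∏ m ∈ s, x m = ∑ s, a' s * ∏ m ∈ s, x m) : a = a' := by
  classical
  have hsub : ∀ t : Finset ι, ∑ s ∈ t.powerset, a s = ∑ s ∈ t.powerset, a' s := fun t => by
    have hpow : univ.filter (· ⊆ t) = t.powerset := by ext; simp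
    simpa [prod_boole, ← sum_filter, ← subset_iff, hpow]
      using h (fun m => if m ∈ t then 1 else 0)
  funext t
  induction t using Finset.strongInduction with
  | H t ih =>
    have hproper : ∑ s ∈ t.powerset.erase t, a s = ∑ s ∈ t.powerset.erase t, a' s :=
      sum_congr rfl fun s hs => ih s <| Finset.ssubset_iff_subset_ne.2
        ⟨mem_powerset.1 (mem_of_mem_erase hs), ne_of_mem_erase hs⟩
    have := hsub t
    rw [← add_sum_erase _ _ (mem_powerset_self t), ← add_sum_erase _ a' (mem_powerset_self t),
      hproper] at this
    exact add_right_cancel this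

theorem mul_prod_add_one_eq_sum (α : K) (c x : ι → K) :
    α * ∏ m, (c m * x m + 1) = ∑ s, (α * ∏ m ∈ s, c m) * ∏ m ∈ s, x m := by
  simp_rw [prod_add_one, powerset_univ, mul_sum, mul_assoc, prod_mul_distrib]

theorem forall_sum_mul_prod_eq_mul_prod_add_one_iff {a : Finset ι → K} {α : K} {c : ι → K} :
    (∀ x : ι → K, ∑ s, a s * ∏ m ∈ s, x m = α * ∏ m, (c m * x m + 1)) ↔
      ∀ s, a s = α * ∏ m ∈ s, c m := by
  simp_rw [mul_prod_add_one_eq_sum]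
  exact ⟨fun h => congrFun (eq_of_forall_sum_mul_prod_eq h), fun h x => by simp_rw [h]⟩

end Coefficients

theorem mul_insert_insert_eq_of_eq_mul_prod {ι K : Type*} [DecidableEq ι] [CommRing K]
    {a : Finset ι → K} {α : K} {c : ι → K} (h : ∀ s, a s = α * ∏ m ∈ s, c m) {i j : ι}
    {s : Finset ι} (hi : i ∉ s) (hj : j ∉ s) (hij : i ≠ j) :
    a s * a (insert j (insert i s)) = a (insert i s) * a (insert j s) := by
  have hj' : j ∉ insert i s := by simpa [hij.symm] using hj
  simp only [h, prod_insert hi, prod_insert hj, prod_insert hj']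
  ring

section StackedDeck

variable {ι K : Type*} [LinearOrder ι] [Field K]

/-- The claim is strengthened to cover `insert i s` for every `i` below `s` as well, so that
adding a new minimum `j` to `t` only needs the discriminant relation with base `t`. -/
theorem eq_mul_prod_of_stacked_deck {a : Finset ι → K} (ha : ∀ s, a s ≠ 0)
    (hΔ : ∀ i j s, i < j → (∀ m ∈ s, j < m) →
      a s * a (insert j (insert i s)) = a (insert i s) * a (insert j s)) (s : Finset ι) :
    a s = a ∅ * ∏ m ∈ s, a {m} / a ∅ := by
  set f : Finset ι → K := fun s => a ∅ * ∏ m ∈ s, a {m} / a ∅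
  suffices ∀ s, a s = f s ∧ ∀ i, (∀ m ∈ s, i < m) → a (insert i s) = f (insert i s) from
    (this s).1
  intro s
  induction s using Finset.induction_on_min with
  | empty => simp [f, mul_div_cancel₀ _ (ha ∅)]
  | insert j t hjt ih =>
    obtain ⟨ht, hins⟩ := ih
    refine ⟨hins j hjt, fun i hi => ?_⟩
    have hij : i < j := hi j (mem_insert_self j t)
    have hit : ∀ m ∈ t, i < m := fun m hm => hij.trans (hjt m hm)
    apply mul_left_cancel₀ (ha t)
    rw [insert_comm, hΔ i j t hij hjt, hins i hit, hins j hjt, ht]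
    exact (mul_insert_insert_eq_of_eq_mul_prod (a := f) (fun _ => rfl)
      (fun h => (hit i h).false) (fun h => (hjt j h).false) hij.ne).symm

theorem exists_eq_mul_prod_iff_stacked_deck {a : Finset ι → K} (ha : ∀ s, a s ≠ 0) :
    (∃ (α : K) (c : ι → K), ∀ s, a s = α * ∏ m ∈ s, c m) ↔
      ∀ i j s, i < j → (∀ m ∈ s, j < m) →
        a s * a (insert j (insert i s)) = a (insert i s) * a (insert j s) :=
  ⟨fun ⟨_, _, h⟩ i j _ hij hjs => mul_insert_insert_eq_of_eq_mul_prod h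
      (fun hi => (hij.trans (hjs i hi)).false) (fun hj => (hjs j hj).false) hij.ne,
    fun hΔ => ⟨_, _, eq_mul_prod_of_stacked_deck ha hΔ⟩⟩

end StackedDeck

section Bits

variable (ι : Type*) [Fintype ι] [DecidableEq ι]

def boolFunEquivFinset : (ι → Bool) ≃ Finset ι where
  toFun b := univ.filter (fun m => b m = true)
  invFun s m := decide (m ∈ s)
  left_inv b := by funext m; simp
  right_inv s := by ext; simp

variable {ι}

theorem boolFunEquivFinset_symm_apply (s : Finset ι) (m : ι) :
    (boolFunEquivFinset ι).symm s m = decide (m ∈ s) := rfl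

theorem boolFunEquivFinset_symm_insert (s : Finset ι) (i : ι) :
    (boolFunEquivFinset ι).symm (insert i s) =
      Function.update ((boolFunEquivFinset ι).symm s) i true := by
  funext m
  by_cases h : m = i <;> simp [boolFunEquivFinset_symm_apply, h]

end Bits

theorem factorization_iff_stacked_deck_discriminants_general
    {R : ℕ} (A : (Fin R → Bool) → ℝ) (hA : ∀ b, A b ≠ 0) :
    (∃ (α : ℝ) (C : Fin R → ℝ), ∀ x : Fin R → ℝ,
        (∑ b : Fin R → Bool, A b * ∏ m ∈ univ.filter (fun m => b m = true), x m)
          = α * ∏ m : Fin R, (C m * x m + 1)) ↔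
      (∀ (i j : Fin R) (b : Fin R → Bool), i < j → (∀ m, m ≤ j → b m = false) →
        A b * A (Function.update (Function.update b i true) j true)
          - A (Function.update b i true) * A (Function.update b j true) = 0) := by
  let e := boolFunEquivFinset (Fin R)
  have hsum (x : Fin R → ℝ) : ∑ b, A b * ∏ m ∈ univ.filter (fun m => b m = true), x m =
      ∑ s, A (e.symm s) * ∏ m ∈ s, x m := by
    rw [← e.sum_comp]
    simp only [Equiv.symm_apply_apply]
    rfl
  simp_rw [hsum, forall_sum_mul_prod_eq_mul_prod_add_one_iff,
    exists_eq_mul_prod_iff_stacked_deck (fun s => hA (e.symm s)), sub_eq_zero]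
  refine forall₂_congr fun i j => Iff.symm <| e.forall_congr_left.trans <| forall_congr' fun s => ?_
  have hlow : (∀ m ≤ j, m ∉ s) ↔ ∀ m ∈ s, j < m :=
    ⟨fun h m hm => not_le.1 fun hmj => h m hmj hm, fun h m hmj hm => (h m hm).not_ge hmj⟩
  simp only [e, boolFunEquivFinset_symm_insert, boolFunEquivFinset_symm_apply,
    decide_eq_false_iff_not, hlow]

/-- **Factorization criterion via stacked-deck discriminants.**  A multilinear
polynomial `P(x) = Σ_b A_b Π_{m : b_m = 1} x_m` with all coefficients nonzero
factors completely into `R` linear factors `α·Π_m (C_m x_m + 1)` (equivalently,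
its zero set is a union of `R` coordinate-aligned hyperplanes) if and only if
`Δ_w = 0` for every stacked-deck wildcard `w ∈ W_R`, i.e. for all wildcard
slots `i < j` and every base sequence `b` vanishing at all positions `≤ j`,
`A_b·A_{b+e_i+e_j} − A_{b+e_i}·A_{b+e_j} = 0`. -/
theorem factorization_iff_stacked_deck_discriminants
    {R : ℕ} (hR : 2 ≤ R) (A : (Fin R → Bool) → ℝ) (hA : ∀ b, A b ≠ 0) :
    (∃ (α : ℝ) (C : Fin R → ℝ), ∀ x : Fin R → ℝ,
        (∑ b : Fin R → Bool, A b * ∏ m ∈ univ.filter (fun m => b m = true), x m)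
          = α * ∏ m : Fin R, (C m * x m + 1)) ↔
      (∀ (i j : Fin R) (b : Fin R → Bool), i < j → (∀ m, m ≤ j → b m = false) →
        A b * A (Function.update (Function.update b i true) j true)
          - A (Function.update b i true) * A (Function.update b j true) = 0) :=
  factorization_iff_stacked_deck_discriminants_general A hA
end

section
/- Large negative weights determine the index by the red subgraph: Let Γ be a connected weighted graph on {1,…,N} whose black edges carry fixed positive weights and whose red edges are e_1,…,e_R (R ≥ 1); fix α_1,…,α_R > 0 and for t > 0 let Γ(t) be the weighted graph with weight −tα_i on e_i and the fixed positive weights on the black edges. Let G_− denote the spanning subgraph on all N vertices whose edge set is {e_1,…,e_R}, and c(G_−) its number of connected components. Then there exists t_0 > 0 such that for all t > t_0 the spectral index of Γ(t) is (n_−, n_0, n_+) = (c(G_−) − 1, 1, N − c(G_−)); in particular, L(Γ(t)) has at least one positive eigenvalue for all sufficiently large t. -/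
open Finset
open scoped Classical

/-- The product of the weights of the edges in `T`. -/
noncomputable def prodWeight {N : ℕ} (γ : Fin N → Fin N → ℝ)
    (T : Finset (Fin N × Fin N)) : ℝ :=
  ∏ p ∈ T, γ p.1 p.2

/-- The black edges: the (ordered) pairs carrying a nonzero weight. -/
noncomputable def blackE {N : ℕ} (γ : Fin N → Fin N → ℝ) : Finset (Fin N × Fin N) :=
  univ.filter fun p => p.1 < p.2 ∧ γ p.1 p.2 ≠ 0

/-- The number of negative eigenvalues (`n₋`) of a real symmetric matrix,
counted with multiplicity. -/
noncomputable def negCount {N : ℕ} (A : Matrix (Fin N) (Fin N) ℝ)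
    (hA : A.IsHermitian) : ℕ :=
  (univ.filter fun i => hA.eigenvalues i < 0).card

/-- The number of zero eigenvalues (`n₀`) of a real symmetric matrix,
counted with multiplicity. -/
noncomputable def zeroCount {N : ℕ} (A : Matrix (Fin N) (Fin N) ℝ)
    (hA : A.IsHermitian) : ℕ :=
  (univ.filter fun i => hA.eigenvalues i = 0).card

/-- The number of positive eigenvalues (`n₊`) of a real symmetric matrix,
counted with multiplicity. -/
noncomputable def posCount {N : ℕ} (A : Matrix (Fin N) (Fin N) ℝ)
    (hA : A.IsHermitian) : ℕ :=
  (univ.filter fun i => 0 < hA.eigenvalues i).card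

/-!
With the sign convention of `lapl`, the quadratic form of `L(Γ(t))` is
`x ↦ (t E_β(x) - E_γ(x)) / 2`, where `E_w(x) = ∑ w_ij (x_i - x_j)²` and `β` is the red weight.
`E_β` vanishes exactly on the `c`-dimensional space of functions constant on the components of
`G₋`; fixing one value to zero leaves a `(c - 1)`-dimensional subspace on which `E_γ > 0` off the
origin, by connectivity of `Γ`, so the form is negative definite there for every `t`. On the
`(N - c)`-dimensional span of the eigenvectors of the positive semidefinite matrix `-L(β)` with
positive eigenvalues, `E_β ≥ μ ‖x‖²` while `E_γ ≤ M ‖x‖²`, so the form is positive definite once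
`t > M / μ`. The constants lie in the kernel, and since `(c - 1) + (N - c) + 1 = N`, the three
resulting lower bounds on `n₋`, `n₊`, `n₀` are equalities.
-/

open Matrix

lemma Submodule.finrank_le_finrank_inf_ker_add_one {K V : Type*} [Field K] [AddCommGroup V]
    [Module K V] [FiniteDimensional K V] (W : Submodule K V) (f : V →ₗ[K] K) :
    Module.finrank K W ≤ Module.finrank K ↥(W ⊓ LinearMap.ker f) + 1 := by
  have h1 := Submodule.finrank_sup_add_finrank_inf_eq W (LinearMap.ker f)
  have h2 := Submodule.finrank_le (W ⊔ LinearMap.ker f)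
  have h3 := LinearMap.finrank_range_add_finrank_ker f
  have h4 := (Submodule.finrank_le (LinearMap.range f)).trans (Module.finrank_self K).le
  omega

lemma SimpleGraph.Reachable.apply_eq_of_forall_adj {V α : Type*} {G : SimpleGraph V} {f : V → α}
    (h : ∀ a b, G.Adj a b → f a = f b) {a b : V} (hab : G.Reachable a b) : f a = f b := by
  obtain ⟨p⟩ := hab
  induction p with
  | nil => rfl
  | cons hadj _ ih => exact (h _ _ hadj).trans ih

namespace Matrix.IsHermitian

variable {n : Type*} [Fintype n] [DecidableEq n] {A : Matrix n n ℝ} (hA : A.IsHermitian)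

noncomputable def eigenCoord (x : n → ℝ) (i : n) : ℝ :=
  ⇑(hA.eigenvectorBasis i) ⬝ᵥ x

lemma sum_eigenCoord_smul (x : n → ℝ) :
    ∑ i, hA.eigenCoord x i • ⇑(hA.eigenvectorBasis i) = x := by
  simpa [eigenCoord, EuclideanSpace.inner_eq_star_dotProduct, dotProduct_comm] using
    congrArg WithLp.ofLp (hA.eigenvectorBasis.sum_repr' (WithLp.toLp 2 x))

lemma eigenCoord_eigenvectorBasis (i j : n) :
    hA.eigenCoord (hA.eigenvectorBasis j) i = if i = j then 1 else 0 := by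
  simpa [eigenCoord, EuclideanSpace.inner_eq_star_dotProduct, dotProduct_comm] using
    orthonormal_iff_ite.mp hA.eigenvectorBasis.orthonormal i j

lemma dotProduct_mulVec_eq_sum (x : n → ℝ) :
    x ⬝ᵥ A *ᵥ x = ∑ i, hA.eigenvalues i * hA.eigenCoord x i ^ 2 := by
  nth_rw 2 [← hA.sum_eigenCoord_smul x]
  simp only [mulVec_sum, mulVec_smul, hA.mulVec_eigenvectorBasis, dotProduct_sum,
    dotProduct_smul, smul_eq_mul]
  refine sum_congr rfl fun i _ => ?_
  rw [eigenCoord, dotProduct_comm]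
  ring

lemma dotProduct_self_eq_sum (x : n → ℝ) : x ⬝ᵥ x = ∑ i, hA.eigenCoord x i ^ 2 := by
  nth_rw 2 [← hA.sum_eigenCoord_smul x]
  simp only [dotProduct_sum, dotProduct_smul, smul_eq_mul]
  refine sum_congr rfl fun i _ => ?_
  rw [eigenCoord, dotProduct_comm]
  ring

noncomputable def eigenSpan (S : Finset n) : Submodule ℝ (n → ℝ) :=
  Submodule.span ℝ (Set.range fun i : S => ⇑(hA.eigenvectorBasis i))

lemma mem_eigenSpan_iff {S : Finset n} {x : n → ℝ} :
    x ∈ hA.eigenSpan S ↔ ∀ i ∉ S, hA.eigenCoord x i = 0 := by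
  constructor
  · intro hx i hi
    induction hx using Submodule.span_induction with
    | mem v hv =>
      obtain ⟨j, rfl⟩ := hv
      rw [eigenCoord_eigenvectorBasis, if_neg (ne_of_mem_of_not_mem j.2 hi).symm]
    | zero => simp [eigenCoord]
    | add u v _ _ hu hv => simp_all [eigenCoord, dotProduct_add]
    | smul c u _ hu => simp_all [eigenCoord, dotProduct_smul]
  · intro h
    rw [← hA.sum_eigenCoord_smul x]
    refine Submodule.sum_mem _ fun i _ => ?_
    by_cases hi : i ∈ S
    · exact Submodule.smul_mem _ _ (Submodule.subset_span ⟨⟨i, hi⟩, rfl⟩)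
    · simp [h i hi]

lemma finrank_eigenSpan (S : Finset n) : Module.finrank ℝ (hA.eigenSpan S) = S.card := by
  rw [eigenSpan, finrank_span_eq_card, Fintype.card_coe]
  exact (hA.eigenvectorBasis.orthonormal.linearIndependent.map' _
    (WithLp.linearEquiv 2 ℝ (n → ℝ)).ker).comp _ Subtype.val_injective

lemma dotProduct_mulVec_eq_sum_of_mem_eigenSpan {S : Finset n} {x : n → ℝ}
    (hx : x ∈ hA.eigenSpan S) :
    x ⬝ᵥ A *ᵥ x = ∑ i ∈ S, hA.eigenvalues i * hA.eigenCoord x i ^ 2 := by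
  rw [hA.dotProduct_mulVec_eq_sum, sum_subset (subset_univ S)]
  intro i _ hi
  simp [hA.mem_eigenSpan_iff.mp hx i hi]

lemma exists_pos_mul_le_of_mem_eigenSpan_pos :
    ∃ μ > 0, ∀ x ∈ hA.eigenSpan {i | 0 < hA.eigenvalues i},
      μ * (x ⬝ᵥ x) ≤ x ⬝ᵥ A *ᵥ x := by
  obtain ⟨μ, hμ, hle⟩ : ∃ μ > 0, ∀ i, 0 < hA.eigenvalues i → μ ≤ hA.eigenvalues i := by
    rcases ({i | 0 < hA.eigenvalues i} : Finset n).eq_empty_or_nonempty with h | h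
    · exact ⟨1, one_pos, fun i hi => absurd hi (by simpa using filter_eq_empty_iff.mp h (mem_univ i))⟩
    · obtain ⟨j, hj, hmin⟩ := exists_min_image _ hA.eigenvalues h
      exact ⟨_, (mem_filter.mp hj).2, fun i hi => hmin i (by simpa using hi)⟩
  refine ⟨μ, hμ, fun x hx => ?_⟩
  rw [hA.dotProduct_self_eq_sum, hA.dotProduct_mulVec_eq_sum, mul_sum]
  refine sum_le_sum fun i _ => ?_
  by_cases hi : 0 < hA.eigenvalues i
  · exact mul_le_mul_of_nonneg_right (hle i hi) (sq_nonneg _)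
  · simp [hA.mem_eigenSpan_iff.mp hx i (by simpa using hi)]

lemma finrank_add_card_le_of_disjoint (S : Finset n) {W : Submodule ℝ (n → ℝ)}
    (hW : Disjoint W (hA.eigenSpan S)) : Module.finrank ℝ W + #S ≤ Fintype.card n := by
  simpa [hA.finrank_eigenSpan] using Submodule.finrank_add_finrank_le_of_disjoint hW

lemma finrank_le_card_neg {W : Submodule ℝ (n → ℝ)}
    (hW : ∀ x ∈ W, x ≠ 0 → x ⬝ᵥ A *ᵥ x < 0) :
    Module.finrank ℝ W ≤ #{i | hA.eigenvalues i < 0} := by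
  have hdisj : Disjoint W (hA.eigenSpan {i | 0 ≤ hA.eigenvalues i}) := by
    refine Submodule.disjoint_def.mpr fun x hxW hxS => ?_
    by_contra hx
    refine (hW x hxW hx).not_ge ?_
    rw [hA.dotProduct_mulVec_eq_sum_of_mem_eigenSpan hxS]
    exact sum_nonneg fun i hi => mul_nonneg (mem_filter.mp hi).2 (sq_nonneg _)
  have := hA.finrank_add_card_le_of_disjoint _ hdisj
  have := card_filter_add_card_filter_not (s := univ) (fun i => hA.eigenvalues i < 0)
  simp only [not_lt, card_univ] at this
  omega

lemma finrank_le_card_pos {W : Submodule ℝ (n → ℝ)}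
    (hW : ∀ x ∈ W, x ≠ 0 → 0 < x ⬝ᵥ A *ᵥ x) :
    Module.finrank ℝ W ≤ #{i | 0 < hA.eigenvalues i} := by
  have hdisj : Disjoint W (hA.eigenSpan {i | hA.eigenvalues i ≤ 0}) := by
    refine Submodule.disjoint_def.mpr fun x hxW hxS => ?_
    by_contra hx
    refine (hW x hxW hx).not_ge ?_
    rw [hA.dotProduct_mulVec_eq_sum_of_mem_eigenSpan hxS]
    exact sum_nonpos fun i hi => mul_nonpos_of_nonpos_of_nonneg (mem_filter.mp hi).2 (sq_nonneg _)
  have := hA.finrank_add_card_le_of_disjoint _ hdisj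
  have := card_filter_add_card_filter_not (s := univ) (fun i => 0 < hA.eigenvalues i)
  simp only [not_lt, card_univ] at this
  omega

lemma card_neg_add_card_zero_add_card_pos :
    #{i | hA.eigenvalues i < 0} + #{i | hA.eigenvalues i = 0} + #{i | 0 < hA.eigenvalues i} =
      Fintype.card n := by
  rw [← card_union_of_disjoint (disjoint_filter.mpr fun _ _ h h' => h.ne h'), ← filter_or,
    ← card_union_of_disjoint (disjoint_filter.mpr fun _ _ h h' => by grind), ← filter_or,
    filter_true_of_mem fun i _ => or_assoc.mpr (lt_trichotomy _ 0), card_univ]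

lemma card_zero_eq_finrank_ker :
    #{i | hA.eigenvalues i = 0} = Module.finrank ℝ (LinearMap.ker A.mulVecLin) := by
  have hrank := hA.rank_eq_card_non_zero_eigs
  have hnullity := LinearMap.finrank_range_add_finrank_ker A.mulVecLin
  have := card_filter_add_card_filter_not (s := univ) (fun i => hA.eigenvalues i = 0)
  rw [rank, Fintype.card_subtype] at hrank
  simp only [ne_eq] at hrank
  simp only [Module.finrank_fintype_fun_eq_card, card_univ] at hnullity this
  omega

lemma card_pos_add_finrank_ker_of_posSemidef (hP : A.PosSemidef) :
    #{i | 0 < hA.eigenvalues i} + Module.finrank ℝ (LinearMap.ker A.mulVecLin) =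
      Fintype.card n := by
  have hneg : #{i | hA.eigenvalues i < 0} = 0 :=
    card_eq_zero.mpr (filter_eq_empty_iff.mpr fun i _ => (hP.eigenvalues_nonneg i).not_gt)
  have := hA.card_neg_add_card_zero_add_card_pos
  rw [hA.card_zero_eq_finrank_ker] at this
  omega

theorem card_eigenvalues_eq_of_subspaces {Wneg Wpos : Submodule ℝ (n → ℝ)}
    (hneg : ∀ x ∈ Wneg, x ≠ 0 → x ⬝ᵥ A *ᵥ x < 0) (hpos : ∀ x ∈ Wpos, x ≠ 0 → 0 < x ⬝ᵥ A *ᵥ x)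
    {v : n → ℝ} (hv0 : v ≠ 0) (hv : A *ᵥ v = 0) {a b : ℕ}
    (ha : a ≤ Module.finrank ℝ Wneg) (hb : b ≤ Module.finrank ℝ Wpos)
    (hdim : Fintype.card n ≤ a + b + 1) :
    #{i | hA.eigenvalues i < 0} = a ∧ #{i | hA.eigenvalues i = 0} = 1 ∧
      #{i | 0 < hA.eigenvalues i} = b := by
  have hker : 1 ≤ #{i | hA.eigenvalues i = 0} := by
    rw [hA.card_zero_eq_finrank_ker, Submodule.one_le_finrank_iff]
    exact fun hbot => hv0 ((Submodule.eq_bot_iff _).mp hbot v hv)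
  have := hA.finrank_le_card_neg hneg
  have := hA.finrank_le_card_pos hpos
  have := hA.card_neg_add_card_zero_add_card_pos
  omega

end Matrix.IsHermitian

section Laplacian

variable {N : ℕ}

def weightGraph (w : Fin N → Fin N → ℝ) : SimpleGraph (Fin N) :=
  SimpleGraph.fromRel fun a b => w a b ≠ 0

noncomputable def dirichletEnergy (w : Fin N → Fin N → ℝ) (x : Fin N → ℝ) : ℝ :=
  ∑ i, ∑ j, w i j * (x i - x j) ^ 2

lemma lapl_mulVec_apply (w : Fin N → Fin N → ℝ) (x : Fin N → ℝ) (i : Fin N) :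
    (lapl w *ᵥ x) i = ∑ j, w i j * (x j - x i) := by
  rw [mulVec, dotProduct, ← add_sum_erase _ _ (mem_univ i), ← add_sum_erase _ _ (mem_univ i),
    sum_congr rfl fun j hj => by rw [lapl, of_apply, if_neg (ne_of_mem_erase hj).symm]]
  simp only [lapl, of_apply, if_true, filter_ne', sub_self, mul_zero, zero_add, mul_sub,
    sum_sub_distrib, ← sum_mul]
  ring

lemma lapl_mulVec_const (w : Fin N → Fin N → ℝ) (c : ℝ) : lapl w *ᵥ (fun _ => c) = 0 := by
  ext i
  simp [lapl_mulVec_apply]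

lemma isHermitian_lapl_iff {w : Fin N → Fin N → ℝ} :
    (lapl w).IsHermitian ↔ ∀ a b, a ≠ b → w a b = w b a := by
  rw [IsHermitian, ← ext_iff]
  refine forall_congr' fun a => forall_congr' fun b => ?_
  simp only [conjTranspose_apply, star_trivial, lapl, of_apply, eq_comm (a := b)]
  split_ifs with h
  · simp [h]
  · simp [h, eq_comm]

lemma dotProduct_lapl_mulVec {w : Fin N → Fin N → ℝ} (hw : (lapl w).IsHermitian)
    (x : Fin N → ℝ) : x ⬝ᵥ lapl w *ᵥ x = -dirichletEnergy w x / 2 := by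
  have hswap : ∑ i, ∑ j, w i j * (x i - x j) * x j = -∑ i, ∑ j, w i j * (x i - x j) * x i := by
    rw [sum_comm, ← sum_neg_distrib]
    refine sum_congr rfl fun i _ => ?_
    rw [← sum_neg_distrib]
    refine sum_congr rfl fun j _ => ?_
    obtain rfl | hij := eq_or_ne j i
    · ring
    · rw [isHermitian_lapl_iff.mp hw j i hij]
      ring
  have hE : dirichletEnergy w x =
      ∑ i, ∑ j, w i j * (x i - x j) * x i - ∑ i, ∑ j, w i j * (x i - x j) * x j := by
    simp only [dirichletEnergy, ← sum_sub_distrib]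
    refine sum_congr rfl fun i _ => sum_congr rfl fun j _ => ?_
    ring
  have hL : x ⬝ᵥ lapl w *ᵥ x = -∑ i, ∑ j, w i j * (x i - x j) * x i := by
    simp only [dotProduct, lapl_mulVec_apply, mul_sum, ← sum_neg_distrib]
    refine sum_congr rfl fun i _ => sum_congr rfl fun j _ => ?_
    ring
  rw [hL, hE, hswap]
  ring

lemma dirichletEnergy_sub_mul (γ β : Fin N → Fin N → ℝ) (t : ℝ) (x : Fin N → ℝ) :
    dirichletEnergy (fun a b => γ a b - t * β a b) x =
      dirichletEnergy γ x - t * dirichletEnergy β x := by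
  simp only [dirichletEnergy, mul_sum, ← sum_sub_distrib]
  refine sum_congr rfl fun i _ => sum_congr rfl fun j _ => ?_
  ring

variable {w : Fin N → Fin N → ℝ}

lemma dirichletEnergy_nonneg (hw : ∀ a b, 0 ≤ w a b) (x : Fin N → ℝ) :
    0 ≤ dirichletEnergy w x :=
  sum_nonneg fun i _ => sum_nonneg fun j _ => mul_nonneg (hw i j) (sq_nonneg _)

lemma dirichletEnergy_eq_zero_iff (hw : ∀ a b, 0 ≤ w a b) {x : Fin N → ℝ} :
    dirichletEnergy w x = 0 ↔ ∀ a b, (weightGraph w).Adj a b → x a = x b := by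
  have hterm : ∀ a b, w a b * (x a - x b) ^ 2 = 0 ↔ w a b = 0 ∨ x a = x b := by
    intro a b
    rw [mul_eq_zero, sq_eq_zero_iff, sub_eq_zero]
  simp only [dirichletEnergy, sum_eq_zero_iff_of_nonneg fun i _ =>
    sum_nonneg fun j _ => mul_nonneg (hw i j) (sq_nonneg (x i - x j)),
    sum_eq_zero_iff_of_nonneg fun j _ => mul_nonneg (hw _ j) (sq_nonneg _),
    mem_univ, true_implies, hterm, weightGraph, SimpleGraph.fromRel_adj]
  constructor
  · rintro h a b ⟨-, hab | hba⟩
    · exact (h a b).resolve_left hab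
    · exact ((h b a).resolve_left hba).symm
  · intro h a b
    by_cases hab : w a b = 0
    · exact Or.inl hab
    by_cases heq : a = b
    · exact Or.inr (heq ▸ rfl)
    · exact Or.inr (h a b ⟨heq, Or.inl hab⟩)

lemma dirichletEnergy_le (hw : ∀ a b, 0 ≤ w a b) (x : Fin N → ℝ) :
    dirichletEnergy w x ≤ 4 * (∑ i, ∑ j, w i j) * (x ⬝ᵥ x) := by
  have hsq : ∀ i, x i ^ 2 ≤ x ⬝ᵥ x := fun i => by
    simpa [dotProduct, sq] using single_le_sum (fun j _ => mul_self_nonneg (x j)) (mem_univ i)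
  have hdiff : ∀ i j, (x i - x j) ^ 2 ≤ 4 * (x ⬝ᵥ x) := fun i j => by
    nlinarith [hsq i, hsq j, sq_nonneg (x i + x j)]
  calc dirichletEnergy w x ≤ ∑ i, ∑ j, w i j * (4 * (x ⬝ᵥ x)) :=
        sum_le_sum fun i _ => sum_le_sum fun j _ => mul_le_mul_of_nonneg_left (hdiff i j) (hw i j)
    _ = 4 * (∑ i, ∑ j, w i j) * (x ⬝ᵥ x) := by
        simp only [← sum_mul]
        ring

end Laplacian

section NonnegWeights

variable {N : ℕ} {β : Fin N → Fin N → ℝ}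

lemma isHermitian_neg_lapl (hsym : ∀ a b, β a b = β b a) : (-lapl β).IsHermitian :=
  (isHermitian_lapl_iff.mpr fun a b _ => hsym a b).neg

lemma dotProduct_neg_lapl_mulVec (hsym : ∀ a b, β a b = β b a) (x : Fin N → ℝ) :
    x ⬝ᵥ (-lapl β) *ᵥ x = dirichletEnergy β x / 2 := by
  rw [neg_mulVec, dotProduct_neg,
    dotProduct_lapl_mulVec (isHermitian_lapl_iff.mpr fun a b _ => hsym a b)]
  ring

variable (hsym : ∀ a b, β a b = β b a) (hβ : ∀ a b, 0 ≤ β a b)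
include hsym hβ

lemma posSemidef_neg_lapl : (-lapl β).PosSemidef :=
  .of_dotProduct_mulVec_nonneg (isHermitian_neg_lapl hsym) fun x => by
    rw [star_trivial, dotProduct_neg_lapl_mulVec hsym]
    exact div_nonneg (dirichletEnergy_nonneg hβ x) zero_le_two

lemma neg_lapl_mulVec_eq_zero_iff {x : Fin N → ℝ} :
    (-lapl β) *ᵥ x = 0 ↔ ∀ a b, (weightGraph β).Adj a b → x a = x b := by
  rw [← (posSemidef_neg_lapl hsym hβ).dotProduct_mulVec_zero_iff, star_trivial,
    dotProduct_neg_lapl_mulVec hsym, div_eq_zero_iff, or_iff_left two_ne_zero,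
    dirichletEnergy_eq_zero_iff hβ]

lemma finrank_ker_neg_lapl :
    Module.finrank ℝ (LinearMap.ker (-lapl β).mulVecLin) =
      Nat.card (weightGraph β).ConnectedComponent := by
  have hker : LinearMap.ker (-lapl β).mulVecLin =
      LinearMap.ker ((weightGraph β).lapMatrix ℝ).toLin' := by
    ext x
    rw [LinearMap.mem_ker, LinearMap.mem_ker, mulVecLin_apply, toLin'_apply,
      neg_lapl_mulVec_eq_zero_iff hsym hβ, SimpleGraph.lapMatrix_mulVec_eq_zero_iff_forall_adj]
  rw [hker, ← SimpleGraph.card_connectedComponent_eq_finrank_ker_toLin'_lapMatrix,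
    Nat.card_eq_fintype_card]

lemma exists_subspace_pos_mul_le_dirichletEnergy :
    ∃ V : Submodule ℝ (Fin N → ℝ),
      Module.finrank ℝ V = N - Nat.card (weightGraph β).ConnectedComponent ∧
      ∃ μ > 0, ∀ x ∈ V, μ * (x ⬝ᵥ x) ≤ dirichletEnergy β x := by
  have hC := isHermitian_neg_lapl hsym
  obtain ⟨μ, hμ, hle⟩ := hC.exists_pos_mul_le_of_mem_eigenSpan_pos
  refine ⟨hC.eigenSpan {i | 0 < hC.eigenvalues i}, ?_, 2 * μ, by positivity, fun x hx => ?_⟩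
  · have := hC.card_pos_add_finrank_ker_of_posSemidef (posSemidef_neg_lapl hsym hβ)
    rw [finrank_ker_neg_lapl hsym hβ, Fintype.card_fin] at this
    rw [hC.finrank_eigenSpan]
    omega
  · have := hle x hx
    rw [dotProduct_neg_lapl_mulVec hsym] at this
    linarith

lemma exists_subspace_dirichletEnergy_pos {γ : Fin N → Fin N → ℝ} (hγ : ∀ a b, 0 ≤ γ a b)
    (hconn : (weightGraph γ ⊔ weightGraph β).Connected) :
    ∃ W : Submodule ℝ (Fin N → ℝ),
      Nat.card (weightGraph β).ConnectedComponent - 1 ≤ Module.finrank ℝ W ∧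
      ∀ x ∈ W, dirichletEnergy β x = 0 ∧ (x ≠ 0 → 0 < dirichletEnergy γ x) := by
  obtain ⟨i₀⟩ := hconn.nonempty
  set K := LinearMap.ker (-lapl β).mulVecLin
  refine ⟨K ⊓ LinearMap.ker (LinearMap.proj i₀), ?_, fun x hx => ?_⟩
  · have := K.finrank_le_finrank_inf_ker_add_one (LinearMap.proj i₀)
    rw [finrank_ker_neg_lapl hsym hβ] at this
    omega
  obtain ⟨hxK, hx₀⟩ := Submodule.mem_inf.mp hx
  have hβx := (neg_lapl_mulVec_eq_zero_iff hsym hβ).mp hxK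
  refine ⟨(dirichletEnergy_eq_zero_iff hβ).mpr hβx, fun hx0 => ?_⟩
  refine (dirichletEnergy_nonneg hγ x).lt_of_ne' fun hE => hx0 ?_
  have hγx := (dirichletEnergy_eq_zero_iff hγ).mp hE
  have hconst : ∀ a b, x a = x b := fun a b =>
    (hconn.preconnected a b).apply_eq_of_forall_adj fun a b hab =>
      ((SimpleGraph.sup_adj _ _ a b).mp hab).elim (hγx a b) (hβx a b)
  funext a
  rw [hconst a i₀]
  exact hx₀

end NonnegWeights

theorem card_eigenvalues_lapl_sub_mul_of_large {N : ℕ} {γ β : Fin N → Fin N → ℝ}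
    (hβsym : ∀ a b, β a b = β b a) (hγ : ∀ a b, 0 ≤ γ a b) (hβ : ∀ a b, 0 ≤ β a b)
    (hconn : (weightGraph γ ⊔ weightGraph β).Connected) :
    ∃ t₀ > (0 : ℝ), ∀ t > t₀, ∀ hH : (lapl fun a b => γ a b - t * β a b).IsHermitian,
      #{i | hH.eigenvalues i < 0} = Nat.card (weightGraph β).ConnectedComponent - 1 ∧
      #{i | hH.eigenvalues i = 0} = 1 ∧
      #{i | 0 < hH.eigenvalues i} = N - Nat.card (weightGraph β).ConnectedComponent := by
  obtain ⟨i₀⟩ := hconn.nonempty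
  have hc : 0 < Nat.card (weightGraph β).ConnectedComponent :=
    have : Nonempty (weightGraph β).ConnectedComponent := ⟨.mk _ i₀⟩
    Nat.card_pos
  obtain ⟨Wneg, hWneg_dim, hWneg⟩ := exists_subspace_dirichletEnergy_pos hβsym hβ hγ hconn
  obtain ⟨Wpos, hWpos_dim, μ, hμ, hWpos⟩ := exists_subspace_pos_mul_le_dirichletEnergy hβsym hβ
  set M := 4 * ∑ i, ∑ j, γ i j
  have hM : 0 ≤ M := mul_nonneg zero_le_four (sum_nonneg fun i _ => sum_nonneg fun j _ => hγ i j)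
  refine ⟨(M + 1) / μ, by positivity, fun t ht hH => ?_⟩
  have ht₀ : 0 < t := lt_trans (by positivity) ht
  have htμ : M + 1 < t * μ := (div_lt_iff₀ hμ).mp ht
  have hform : ∀ x, x ⬝ᵥ lapl (fun a b => γ a b - t * β a b) *ᵥ x =
      (t * dirichletEnergy β x - dirichletEnergy γ x) / 2 := fun x => by
    rw [dotProduct_lapl_mulVec hH, dirichletEnergy_sub_mul]
    ring
  refine hH.card_eigenvalues_eq_of_subspaces (Wneg := Wneg) (Wpos := Wpos) ?_ ?_
    (v := fun _ => 1) (Function.ne_iff.mpr ⟨i₀, one_ne_zero⟩) (lapl_mulVec_const _ 1)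
    hWneg_dim hWpos_dim.ge (by rw [Fintype.card_fin]; omega)
  · intro x hx hx0
    rw [hform, (hWneg x hx).1]
    linarith [(hWneg x hx).2 hx0]
  · intro x hx hx0
    have hxx : 0 < x ⬝ᵥ x := by simpa using dotProduct_self_star_pos_iff.mpr hx0
    have hβx := mul_le_mul_of_nonneg_left (hWpos x hx) ht₀.le
    rw [hform]
    nlinarith [dirichletEnergy_le hγ x]

section RedEdges

variable {N R : ℕ} (e : Fin R → Fin N × Fin N) (α : Fin R → ℝ)

noncomputable def redWeight (a b : Fin N) : ℝ :=
  ∑ m ∈ univ.filter (fun m => e m = (a, b) ∨ e m = (b, a)), α m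

lemma redWeight_comm (a b : Fin N) : redWeight e α a b = redWeight e α b a := by
  simp only [redWeight, or_comm]

lemma redWeight_nonneg (hα : ∀ i, 0 ≤ α i) (a b : Fin N) : 0 ≤ redWeight e α a b :=
  sum_nonneg fun m _ => hα m

variable {α} (hα : ∀ i, 0 < α i)
include hα

lemma redWeight_ne_zero_iff {a b : Fin N} :
    redWeight e α a b ≠ 0 ↔ (a, b) ∈ univ.image e ∨ (b, a) ∈ univ.image e := by
  rw [redWeight, ne_eq, sum_eq_zero_iff_of_nonneg fun m _ => (hα m).le]
  simp only [mem_filter, mem_univ, true_and, mem_image, (hα _).ne', imp_false, not_forall,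
    not_not, exists_or]

lemma weightGraph_redWeight : weightGraph (redWeight e α) = edgeGraph (univ.image e) := by
  ext a b
  simp only [weightGraph, edgeGraph, SimpleGraph.fromRel_adj, redWeight_ne_zero_iff e hα]
  tauto

lemma edgeGraph_le_sup_weightGraph (γ : Fin N → Fin N → ℝ) :
    edgeGraph (blackE γ ∪ univ.image e) ≤ weightGraph γ ⊔ weightGraph (redWeight e α) := by
  intro a b hab
  simp only [edgeGraph, SimpleGraph.fromRel_adj, mem_union, blackE, mem_filter] at hab
  simp only [SimpleGraph.sup_adj, weightGraph, SimpleGraph.fromRel_adj, redWeight_ne_zero_iff e hα]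
  tauto

end RedEdges

theorem large_negative_weights_index_general
    {N R : ℕ} (γ : Fin N → Fin N → ℝ)
    (hpos : ∀ a b, 0 ≤ γ a b)
    (e : Fin R → Fin N × Fin N)
    (hconn : (edgeGraph (blackE γ ∪ univ.image e)).Connected)
    (α : Fin R → ℝ) (hα : ∀ i, 0 < α i) :
    ∃ t₀ > (0 : ℝ), ∀ t > t₀,
      ∀ hH : (lapl (fun a b => γ a b -
          ∑ m ∈ univ.filter (fun m => e m = (a, b) ∨ e m = (b, a)), t * α m)).IsHermitian,
        negCount _ hH = Nat.card (edgeGraph (univ.image e)).ConnectedComponent - 1 ∧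
        zeroCount _ hH = 1 ∧
        posCount _ hH = N - Nat.card (edgeGraph (univ.image e)).ConnectedComponent := by
  obtain ⟨t₀, ht₀, hlarge⟩ := card_eigenvalues_lapl_sub_mul_of_large (redWeight_comm e α) hpos
    (redWeight_nonneg e α fun i => (hα i).le) (hconn.mono (edgeGraph_le_sup_weightGraph e hα γ))
  refine ⟨t₀, ht₀, fun t ht => ?_⟩
  have hw : (fun a b => γ a b - ∑ m ∈ univ.filter (fun m => e m = (a, b) ∨ e m = (b, a)),
      t * α m) = fun a b => γ a b - t * redWeight e α a b := by
    simp only [redWeight, mul_sum]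
  rw [hw, ← weightGraph_redWeight e hα]
  exact hlarge t ht

/-- **Large negative weights determine the index by the red subgraph.**
Let `Γ` be connected with positive black weights `γ` and red edges
`e₁,…,e_R` (`R ≥ 1`); fix `α_i > 0` and give `e_i` the weight `−tα_i`.
Let `c` be the number of connected components of the spanning subgraph `G₋`
on all `N` vertices with edge set `{e₁,…,e_R}`.  Then for all sufficiently
large `t`, the spectral index of `L(Γ(t))` is
`(n₋, n₀, n₊) = (c − 1, 1, N − c)`; in particular there is at least one
positive eigenvalue. -/
theorem large_negative_weights_index
    {N R : ℕ} (hR : 0 < R) (γ : Fin N → Fin N → ℝ)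
    (hsym : ∀ a b, γ a b = γ b a) (hdiag : ∀ a, γ a a = 0)
    (hpos : ∀ a b, 0 ≤ γ a b)
    (e : Fin R → Fin N × Fin N)
    (he : ∀ i, (e i).1 < (e i).2) (hinj : Function.Injective e)
    (hnotblack : ∀ i, γ (e i).1 (e i).2 = 0)
    (hconn : (edgeGraph (blackE γ ∪ univ.image e)).Connected)
    (α : Fin R → ℝ) (hα : ∀ i, 0 < α i) :
    ∃ t₀ > (0 : ℝ), ∀ t > t₀,
      ∀ hH : (lapl (fun a b => γ a b -
          ∑ m ∈ univ.filter (fun m => e m = (a, b) ∨ e m = (b, a)), t * α m)).IsHermitian,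
        negCount _ hH = Nat.card (edgeGraph (univ.image e)).ConnectedComponent - 1 ∧
        zeroCount _ hH = 1 ∧
        posCount _ hH = N - Nat.card (edgeGraph (univ.image e)).ConnectedComponent :=
  large_negative_weights_index_general γ hpos e hconn α hα
end
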